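/- arXiv:2510.03105 — 7 statements merged into one kernel-verified Lean document; each statement's English description precedes it below -/
import Mathlib

section
/- Let d ≥ 2 be an even integer, f ∈ ℝ[x₁,…,xₙ] with deg f ≤ d, and suppose z = (z_{α,i}) is f-feasible. Then f(x) ≥ f(0) − obj_f(z) for every x ∈ ℝⁿ; in particular f(0) − ρ(f) is a lower bound for f on ℝⁿ. -/
open MvPolynomial Finset

noncomputable section

/-- The weight `|α| = Σᵢ αᵢ` of a multi-exponent. -/
def wt {n : ℕ} (α : Fin n →₀ ℕ) : ℕ := α.sum fun _ e => e

/-- `Δ(f)`: exponents `α` with `|α| ≤ d`, `f_α ≠ 0`, `α ∉ {0, d·e₁, …, d·eₙ}`, and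
`f_α x^α` not a square in `ℝ[x]` (equivalently `f_α < 0` or some `αᵢ` odd). -/
def Delta {n : ℕ} (d : ℕ) (f : MvPolynomial (Fin n) ℝ) : Finset (Fin n →₀ ℕ) :=
  f.support.filter fun α =>
    wt α ≤ d ∧ α ≠ 0 ∧ (∀ i, α ≠ Finsupp.single i d) ∧
      (f.coeff α < 0 ∨ ∃ i, Odd (α i))

/-- `z` is an `h`-feasible family. -/
def Feasible {n : ℕ} (d : ℕ) (h : MvPolynomial (Fin n) ℝ)
    (z : (Fin n →₀ ℕ) → Fin n → ℝ) : Prop :=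
  (∀ α ∈ Delta d h, ∀ i, 0 ≤ z α i ∧ (z α i = 0 ↔ α i = 0)) ∧
  (∀ i, ∑ α ∈ Delta d h, z α i ≤ h.coeff (Finsupp.single i d)) ∧
  (∀ α ∈ Delta d h, wt α = d →
    ∏ i ∈ univ.filter (fun i => 0 < α i), (z α i / (α i : ℝ)) ^ (α i) =
      (h.coeff α / (d : ℝ)) ^ d)

/-- The objective value `obj_h(z)`. -/
def obj {n : ℕ} (d : ℕ) (h : MvPolynomial (Fin n) ℝ)
    (z : (Fin n →₀ ℕ) → Fin n → ℝ) : ℝ :=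
  ∑ α ∈ (Delta d h).filter (fun α => wt α < d),
    ((d : ℝ) - (wt α : ℝ)) *
      ((h.coeff α / (d : ℝ)) ^ d *
        ∏ i ∈ univ.filter (fun i => 0 < α i), ((α i : ℝ) / z α i) ^ (α i)) ^
        ((1 : ℝ) / ((d : ℝ) - (wt α : ℝ)))

/-- `ρ(h) = inf { obj_h(z) : z h-feasible }`, `+∞` if infeasible. -/
def rho {n : ℕ} (d : ℕ) (h : MvPolynomial (Fin n) ℝ) : EReal :=
  sInf {r : EReal | ∃ z, Feasible d h z ∧ r = ((obj d h z : ℝ) : EReal)}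

/-- `h_gp = h(0) - ρ(h)`. -/
def gp {n : ℕ} (d : ℕ) (h : MvPolynomial (Fin n) ℝ) : EReal :=
  ((h.coeff 0 : ℝ) : EReal) - rho d h

/-- `s(f,g) = sup { G(λ)_gp : λ ∈ [0,∞)^m }` where `G(λ) = f - Σ λⱼ gⱼ`. -/
def sBound {n m : ℕ} (d : ℕ) (f : MvPolynomial (Fin n) ℝ)
    (g : Fin m → MvPolynomial (Fin n) ℝ) : EReal :=
  sSup {r : EReal | ∃ lam : Fin m → ℝ, (∀ j, 0 ≤ lam j) ∧
    r = gp d (f - ∑ j, C (lam j) * g j)}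

/-- `Δ'(f)`: nonzero exponents `α` with `f_α ≠ 0` and `f_α x^α` not a square. -/
def Delta' {n : ℕ} (f : MvPolynomial (Fin n) ℝ) : Finset (Fin n →₀ ℕ) :=
  f.support.filter fun α => α ≠ 0 ∧ (f.coeff α < 0 ∨ ∃ i, Odd (α i))

/-- The trivial bound `f_{tr,N} = f(0) - Σ_{α ∈ Δ'(f)} |f_α| N^α`. -/
def trivialBound {n : ℕ} (f : MvPolynomial (Fin n) ℝ) (N : Fin n → ℝ) : ℝ :=
  f.coeff 0 - ∑ α ∈ Delta' f, |f.coeff α| * ∏ i, N i ^ (α i)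

private lemma wt_eq_sum {n : ℕ} (α : Fin n →₀ ℕ) : wt α = ∑ i, α i :=
  Finsupp.sum_fintype _ _ (fun _ => rfl)

private lemma wt_eq_sum_filter {n : ℕ} (α : Fin n →₀ ℕ) :
    wt α = ∑ i ∈ univ.filter (fun i => 0 < α i), α i := by
  rw [wt_eq_sum, Finset.sum_filter]
  apply Finset.sum_congr rfl
  intro i _
  rcases Nat.eq_zero_or_pos (α i) with h | h
  · simp [h]
  · simp [h]

private lemma amgm_opt {ι : Type*} (s : Finset ι) (w v : ι → ℝ)
    (hw : ∀ i ∈ s, 0 ≤ w i) (hv : ∀ i ∈ s, 0 ≤ v i) (W c : ℝ) (hW : 0 ≤ W) (hc : 0 ≤ c)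
    (hsum : ∑ i ∈ s, w i + W = 1) :
    (∏ i ∈ s, v i ^ w i) * c ^ W ≤ (∑ i ∈ s, w i * v i) + W * c := by
  classical
  have hmap : (none : Option ι) ∉ s.map ⟨some, Option.some_injective ι⟩ := by simp
  have h := Real.geom_mean_le_arith_mean_weighted
    (insert none (s.map ⟨some, Option.some_injective ι⟩))
    (fun o => o.elim W w) (fun o => o.elim c v) ?_ ?_ ?_
  · rw [Finset.prod_insert hmap, Finset.sum_insert hmap, Finset.prod_map, Finset.sum_map] at h
    simp only [Option.elim_none, Option.elim_some, Function.Embedding.coeFn_mk] at h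
    linarith [h]
  · intro o ho
    rcases o with _ | i
    · exact hW
    · simp only [Finset.mem_insert, Finset.mem_map, Function.Embedding.coeFn_mk] at ho
      rcases ho with h' | ⟨j, hj, hji⟩
      · exact absurd h' (by simp)
      · injection hji with h2; subst h2; exact hw j hj
  · rw [Finset.sum_insert hmap, Finset.sum_map]
    simp only [Option.elim_none, Option.elim_some, Function.Embedding.coeFn_mk]
    linarith [hsum]
  · intro o ho
    rcases o with _ | i
    · exact hc
    · simp only [Finset.mem_insert, Finset.mem_map, Function.Embedding.coeFn_mk] at ho
      rcases ho with h' | ⟨j, hj, hji⟩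
      · exact absurd h' (by simp)
      · injection hji with h2; subst h2; exact hv j hj

private lemma alpha_bound {n : ℕ} (d : ℕ) (hd2 : 2 ≤ d) (hdeven : Even d)
    (α : Fin n →₀ ℕ) (hwt : wt α ≤ d) (hα0 : α ≠ 0)
    (A : ℝ) (zz : Fin n → ℝ)
    (hzz : ∀ i, 0 ≤ zz i ∧ (zz i = 0 ↔ α i = 0))
    (hprod : wt α = d →
      ∏ i ∈ univ.filter (fun i => 0 < α i), (zz i / (α i : ℝ)) ^ (α i) = (A / (d:ℝ)) ^ d)
    (x : Fin n → ℝ) :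
    -(∑ i, zz i * x i ^ d) -
      (if wt α < d then ((d:ℝ) - (wt α : ℝ)) *
        ((A / (d:ℝ)) ^ d * ∏ i ∈ univ.filter (fun i => 0 < α i), ((α i : ℝ) / zz i) ^ (α i)) ^
          ((1:ℝ)/((d:ℝ) - (wt α:ℝ))) else 0) ≤ A * ∏ i, x i ^ (α i) := by
  set S := univ.filter (fun i : Fin n => 0 < α i) with hS
  have hd0 : (0:ℝ) < d := by positivity
  have hdne : (d:ℝ) ≠ 0 := ne_of_gt hd0
  have hzpos : ∀ i ∈ S, 0 < zz i := by
    intro i hi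
    simp only [hS, Finset.mem_filter] at hi
    rcases (hzz i).1.lt_or_eq with h | h
    · exact h
    · exfalso; have := (hzz i).2.mp h.symm; omega
  have hαpos : ∀ i ∈ S, (0:ℝ) < (α i : ℝ) := by
    intro i hi
    simp only [hS, Finset.mem_filter] at hi
    exact_mod_cast hi.2
  set y : Fin n → ℝ := fun i => |x i| with hy
  have hy0 : ∀ i, 0 ≤ y i := fun i => abs_nonneg _
  have hxy : ∀ i, x i ^ d = y i ^ d := fun i => (hdeven.pow_abs (x i)).symm
  -- reduce to |A| * ∏ y^α
  have hprod_univ : ∏ i, y i ^ α i = ∏ i ∈ S, y i ^ α i := by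
    symm
    rw [hS]
    apply Finset.prod_filter_of_ne
    intro i _ h
    rcases Nat.eq_zero_or_pos (α i) with h0 | h0
    · exact absurd (by simp [h0]) h
    · exact h0
  have habs : -(|A| * ∏ i ∈ S, y i ^ α i) ≤ A * ∏ i, x i ^ α i := by
    have h1 : |A * ∏ i, x i ^ α i| = |A| * ∏ i ∈ S, y i ^ α i := by
      rw [abs_mul, Finset.abs_prod, ← hprod_univ]
      congr 1
      exact Finset.prod_congr rfl fun i _ => abs_pow _ _
    calc -(|A| * ∏ i ∈ S, y i ^ α i) = -|A * ∏ i, x i ^ α i| := by rw [h1]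
      _ ≤ A * ∏ i, x i ^ α i := neg_abs_le _
  -- AM-GM setup
  set w : Fin n → ℝ := fun i => (α i : ℝ) / d with hw
  set v : Fin n → ℝ := fun i => zz i * y i ^ d / (α i : ℝ) with hv
  have hw0 : ∀ i ∈ S, 0 ≤ w i := fun i _ => by positivity
  have hv0 : ∀ i ∈ S, 0 ≤ v i := fun i hi =>
    div_nonneg (mul_nonneg (hzz i).1 (by positivity)) (le_of_lt (hαpos i hi))
  have hwtR : (wt α : ℝ) = ∑ i ∈ S, (α i : ℝ) := by
    rw [wt_eq_sum_filter]; push_cast; rfl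
  have hwsum : ∑ i ∈ S, w i = (wt α : ℝ) / d := by
    rw [hwtR, Finset.sum_div]
  -- per-factor computation
  have hv_pow : ∀ i ∈ S, v i ^ w i = (zz i / (α i : ℝ)) ^ w i * y i ^ α i := by
    intro i hi
    have h1 : v i = (zz i / (α i : ℝ)) * y i ^ d := by rw [hv]; ring
    rw [h1, Real.mul_rpow (le_of_lt (div_pos (hzpos i hi) (hαpos i hi))) (by positivity)]
    congr 1
    rw [← Real.rpow_natCast (y i) d, ← Real.rpow_natCast (y i) (α i),
      ← Real.rpow_mul (hy0 i)]
    congr 1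
    rw [hw]
    field_simp
  have hvprod : ∏ i ∈ S, v i ^ w i
      = (∏ i ∈ S, (zz i / (α i : ℝ)) ^ w i) * ∏ i ∈ S, y i ^ α i := by
    rw [← Finset.prod_mul_distrib]
    exact Finset.prod_congr rfl hv_pow
  have gen : ∀ g : Fin n → ℝ, (∀ i ∈ S, 0 ≤ g i) →
      ∏ i ∈ S, g i ^ w i = (∏ i ∈ S, g i ^ (α i)) ^ ((1:ℝ)/d) := by
    intro g hg
    rw [← Real.finset_prod_rpow S _ (fun i hi => pow_nonneg (hg i hi) _) ((1:ℝ)/d)]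
    apply Finset.prod_congr rfl
    intro i hi
    rw [← Real.rpow_natCast (g i) (α i), ← Real.rpow_mul (hg i hi)]
    congr 1
    rw [hw]
    field_simp
  have hQR : (∏ i ∈ S, (zz i / (α i : ℝ)) ^ w i) * (∏ i ∈ S, ((α i : ℝ) / zz i) ^ w i) = 1 := by
    rw [← Finset.prod_mul_distrib]
    apply Finset.prod_eq_one
    intro i hi
    rw [← Real.mul_rpow (le_of_lt (div_pos (hzpos i hi) (hαpos i hi)))
      (le_of_lt (div_pos (hαpos i hi) (hzpos i hi)))]
    have h1 : zz i / (α i : ℝ) * ((α i : ℝ) / zz i) = 1 := by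
      rw [div_mul_div_comm, mul_comm (zz i)]
      exact div_self (ne_of_gt (mul_pos (hαpos i hi) (hzpos i hi)))
    rw [h1, Real.one_rpow]
  have hAd : ((A / (d:ℝ)) ^ d : ℝ) ^ ((1:ℝ)/d) = |A| / d := by
    have h1 : (A / (d:ℝ)) ^ d = (|A| / d) ^ d := by
      rw [show |A| / (d:ℝ) = |A / (d:ℝ)| by rw [abs_div, abs_of_pos hd0],
        hdeven.pow_abs]
    rw [h1, ← Real.rpow_natCast (|A|/(d:ℝ)) d, ← Real.rpow_mul (by positivity)]
    rw [mul_one_div, div_self hdne, Real.rpow_one]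
  have hsumv : ∑ i ∈ S, w i * v i = (∑ i, zz i * x i ^ d) / d := by
    have h1 : ∀ i ∈ S, w i * v i = zz i * y i ^ d / d := by
      intro i hi
      have hαne : (α i : ℝ) ≠ 0 := ne_of_gt (hαpos i hi)
      simp only [hw, hv]
      field_simp
    rw [Finset.sum_congr rfl h1, ← Finset.sum_div]
    congr 1
    have h2 : ∑ i, zz i * x i ^ d = ∑ i, zz i * y i ^ d :=
      Finset.sum_congr rfl (fun i _ => by rw [hxy])
    rw [h2, hS]
    apply Finset.sum_filter_of_ne
    intro i _ hne
    have hzne : zz i ≠ 0 := fun h => hne (by rw [h, zero_mul])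
    have hαne : α i ≠ 0 := fun h => hzne ((hzz i).2.mpr h)
    exact Nat.pos_of_ne_zero hαne
  rcases lt_or_eq_of_le hwt with hlt | heq
  · -- case wt α < d
    have hltR : (wt α : ℝ) < d := by exact_mod_cast hlt
    rw [if_pos hlt]
    set cb := (A / (d:ℝ)) ^ d * ∏ i ∈ S, ((α i : ℝ) / zz i) ^ (α i) with hcb
    have hprodnn : (0:ℝ) ≤ ∏ i ∈ S, ((α i : ℝ) / zz i) ^ (α i) :=
      Finset.prod_nonneg fun i _ => pow_nonneg (div_nonneg (Nat.cast_nonneg _) (hzz i).1) _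
    have hcb0 : 0 ≤ cb := mul_nonneg (hdeven.pow_nonneg _) hprodnn
    set c := cb ^ ((1:ℝ)/((d:ℝ) - (wt α:ℝ))) with hc
    have hc0 : 0 ≤ c := Real.rpow_nonneg hcb0 _
    set W := ((d:ℝ) - (wt α:ℝ)) / d with hWdef
    have hW0 : 0 ≤ W := div_nonneg (by linarith) (le_of_lt hd0)
    have hsum1 : ∑ i ∈ S, w i + W = 1 := by
      rw [hwsum, hWdef]
      field_simp
      ring
    have hamgm := amgm_opt S w v hw0 hv0 W c hW0 hc0 hsum1
    have hcW : c ^ W = (|A|/d) * ∏ i ∈ S, ((α i : ℝ) / zz i) ^ w i := by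
      rw [hc, ← Real.rpow_mul hcb0]
      have he : (1/((d:ℝ) - (wt α:ℝ))) * W = 1/d := by
        rw [hWdef]
        have : (d:ℝ) - (wt α:ℝ) ≠ 0 := by linarith
        field_simp
      rw [he, hcb, Real.mul_rpow (hdeven.pow_nonneg _) hprodnn, hAd,
        ← gen (fun i => (α i : ℝ) / zz i)
          (fun i hi => le_of_lt (div_pos (hαpos i hi) (hzpos i hi)))]
    have hLHS : (∏ i ∈ S, v i ^ w i) * c ^ W = (|A|/d) * ∏ i ∈ S, y i ^ α i := by
      rw [hvprod, hcW]
      calc (∏ i ∈ S, (zz i / (α i : ℝ)) ^ w i) * (∏ i ∈ S, y i ^ α i) *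
            ((|A|/d) * ∏ i ∈ S, ((α i : ℝ) / zz i) ^ w i)
          = (|A|/d) * ((∏ i ∈ S, (zz i / (α i : ℝ)) ^ w i) *
              (∏ i ∈ S, ((α i : ℝ) / zz i) ^ w i)) * (∏ i ∈ S, y i ^ α i) := by ring
        _ = (|A|/d) * ∏ i ∈ S, y i ^ α i := by rw [hQR, mul_one]
    rw [hLHS, hsumv] at hamgm
    have hmul := mul_le_mul_of_nonneg_left hamgm (le_of_lt hd0)
    have e1 : (d:ℝ) * ((|A|/d) * (∏ i ∈ S, y i ^ α i)) = |A| * ∏ i ∈ S, y i ^ α i := by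
      field_simp
    have e2 : (d:ℝ) * ((∑ i, zz i * x i ^ d)/d + W * c)
        = (∑ i, zz i * x i ^ d) + ((d:ℝ) - (wt α:ℝ)) * c := by
      rw [hWdef]
      field_simp
    rw [e1, e2] at hmul
    linarith [habs, hmul]
  · -- case wt α = d
    rw [if_neg (by omega)]
    have hsum1 : ∑ i ∈ S, w i + 0 = 1 := by
      rw [hwsum, heq, add_zero, div_self hdne]
    have hamgm := amgm_opt S w v hw0 hv0 0 1 le_rfl zero_le_one hsum1
    rw [Real.rpow_zero, mul_one] at hamgm
    have hQ : ∏ i ∈ S, (zz i / (α i : ℝ)) ^ w i = |A|/d := by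
      rw [gen (fun i => zz i / (α i : ℝ))
        (fun i hi => le_of_lt (div_pos (hzpos i hi) (hαpos i hi))), hprod heq, hAd]
    rw [hvprod, hQ, hsumv] at hamgm
    have hmul := mul_le_mul_of_nonneg_left hamgm (le_of_lt hd0)
    have e1 : (d:ℝ) * ((|A|/d) * (∏ i ∈ S, y i ^ α i)) = |A| * ∏ i ∈ S, y i ^ α i := by
      field_simp
    have e2 : (d:ℝ) * ((∑ i, zz i * x i ^ d)/d + 0 * 1) = ∑ i, zz i * x i ^ d := by
      field_simp
      ring
    rw [e1, e2] at hmul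
    linarith [habs, hmul]

private lemma key {n : ℕ} (d : ℕ) (hd2 : 2 ≤ d) (hdeven : Even d)
    (f : MvPolynomial (Fin n) ℝ) (hdeg : f.totalDegree ≤ d)
    (z : (Fin n →₀ ℕ) → Fin n → ℝ) (hz : Feasible d f z) (x : Fin n → ℝ) :
    f.coeff 0 - obj d f z ≤ eval x f := by
  classical
  obtain ⟨hz1, hz2, hz3⟩ := hz
  have hdne : d ≠ 0 := by omega
  set E : (Fin n →₀ ℕ) → ℝ := fun α =>
    if wt α < d then ((d:ℝ) - (wt α:ℝ)) *
      ((f.coeff α / (d:ℝ)) ^ d *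
        ∏ i ∈ univ.filter (fun i => 0 < α i), ((α i : ℝ) / z α i) ^ (α i)) ^
        ((1:ℝ)/((d:ℝ) - (wt α:ℝ))) else 0 with hE
  set g : (Fin n →₀ ℕ) → ℝ := fun α =>
    (if α = 0 then f.coeff 0 else 0)
    + (∑ i, (if α = Finsupp.single i d then f.coeff (Finsupp.single i d) else 0) * x i ^ d)
    + (if α ∈ Delta d f then (-(∑ i, z α i * x i ^ d) - E α) else 0) with hg
  -- pointwise lower bound
  have hge : ∀ α ∈ f.support, g α ≤ f.coeff α * ∏ i, x i ^ α i := by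
    intro α hα
    have hwtα : wt α ≤ d := le_trans (le_totalDegree hα) hdeg
    by_cases hΔ : α ∈ Delta d f
    · have hΔ' := hΔ
      simp only [Delta, Finset.mem_filter] at hΔ'
      obtain ⟨-, -, hα0, hαsingle, -⟩ := hΔ'
      have h1 : (if α = 0 then f.coeff 0 else 0) = 0 := if_neg hα0
      have h2 : ∀ i, (if α = Finsupp.single i d then f.coeff (Finsupp.single i d) else 0) = 0 :=
        fun i => if_neg (hαsingle i)
      simp only [hg]
      simp only [h1, h2, zero_mul, Finset.sum_const_zero, zero_add, if_pos hΔ]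
      have := alpha_bound d hd2 hdeven α hwtα hα0 (f.coeff α) (z α) (hz1 α hΔ)
        (hz3 α hΔ) x
      rw [hE]
      exact this
    · by_cases h0 : α = 0
      · subst h0
        simp only [hg]
        have h2 : ∀ i : Fin n, ((0 : Fin n →₀ ℕ) = Finsupp.single i d) = False :=
          fun i => eq_false fun h => hdne (by simpa using (Finsupp.single_eq_zero).mp h.symm)
        simp [hΔ, h2, Finsupp.coe_zero]
      · by_cases hsing : ∃ i, α = Finsupp.single i d
        · obtain ⟨i, rfl⟩ := hsing
          simp only [hg]
          have hinj : ∀ j : Fin n,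
              (Finsupp.single i d = Finsupp.single j d) ↔ i = j := by
            intro j
            constructor
            · intro h
              by_contra hne
              have := Finsupp.single_eq_single_iff i j d d |>.mp h
              rcases this with ⟨h1, -⟩ | ⟨h1, -⟩
              · exact hne h1
              · exact hdne h1
            · rintro rfl; rfl
          have hsum : ∑ j, (if Finsupp.single i d = Finsupp.single j d
              then f.coeff (Finsupp.single j d) else 0) * x j ^ d
              = f.coeff (Finsupp.single i d) * x i ^ d := by
            rw [Finset.sum_eq_single i]
            · rw [if_pos rfl]
            · intro j _ hj
              rw [if_neg (fun h => hj ((hinj j).mp h).symm), zero_mul]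
            · intro h; exact absurd (Finset.mem_univ i) h
          have hne0 : (Finsupp.single i d : Fin n →₀ ℕ) ≠ 0 :=
            fun h => hdne (by simpa using (Finsupp.single_eq_zero).mp h)
          rw [hsum, if_neg hne0, if_neg hΔ, zero_add, add_zero]
          have : ∏ j, x j ^ (Finsupp.single i d) j = x i ^ d := by
            simp [Finsupp.single_apply, pow_ite]
          rw [this]
        · -- remaining: coefficient positive, all exponents even
          push_neg at hsing
          have hcoef : f.coeff α ≠ 0 := MvPolynomial.mem_support_iff.mp hα
          have hnot : ¬(f.coeff α < 0 ∨ ∃ i, Odd (α i)) := by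
            intro hcontra
            exact hΔ (by
              simp only [Delta, Finset.mem_filter]
              exact ⟨hα, hwtα, h0, hsing, hcontra⟩)
          push_neg at hnot
          obtain ⟨hpos, heven⟩ := hnot
          have hg0 : g α = 0 := by
            simp only [hg]
            simp only [if_neg h0, if_neg hΔ]
            have h2 : ∀ i, (if α = Finsupp.single i d then f.coeff (Finsupp.single i d) else 0)
                = 0 := fun i => if_neg (hsing i)
            simp [h2]
          rw [hg0]
          apply mul_nonneg hpos
          apply Finset.prod_nonneg
          intro i _
          exact ((Nat.not_odd_iff_even.mp (heven i))).pow_nonneg _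
  -- summation
  have heval : eval x f = ∑ α ∈ f.support, f.coeff α * ∏ i, x i ^ α i := eval_eq' x f
  have hsumg : ∑ α ∈ f.support, g α
      = f.coeff 0 + (∑ i, f.coeff (Finsupp.single i d) * x i ^ d)
        + ∑ α ∈ Delta d f, (-(∑ i, z α i * x i ^ d) - E α) := by
    simp only [hg]
    rw [Finset.sum_add_distrib, Finset.sum_add_distrib]
    congr 1
    congr 1
    · rw [Finset.sum_ite_eq' f.support (0 : Fin n →₀ ℕ) (fun _ => f.coeff 0)]
      by_cases h : (0 : Fin n →₀ ℕ) ∈ f.support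
      · rw [if_pos h]
      · rw [if_neg h, MvPolynomial.notMem_support_iff.mp h]
    · rw [Finset.sum_comm]
      apply Finset.sum_congr rfl
      intro i _
      rw [← Finset.sum_mul,
        Finset.sum_ite_eq' f.support (Finsupp.single i d)
          (fun _ => f.coeff (Finsupp.single i d))]
      by_cases h : Finsupp.single i d ∈ f.support
      · rw [if_pos h]
      · rw [if_neg h, MvPolynomial.notMem_support_iff.mp h, zero_mul]
    · have hsub : Delta d f ⊆ f.support := Finset.filter_subset _ _
      rw [← Finset.sum_filter, Finset.filter_mem_eq_inter, Finset.inter_eq_right.mpr hsub]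
  have hsplit : ∑ α ∈ Delta d f, (-(∑ i, z α i * x i ^ d) - E α)
      = -(∑ i, (∑ α ∈ Delta d f, z α i) * x i ^ d) - obj d f z := by
    rw [Finset.sum_sub_distrib]
    congr 1
    · rw [Finset.sum_neg_distrib]
      congr 1
      rw [Finset.sum_comm]
      exact Finset.sum_congr rfl fun i _ => by rw [Finset.sum_mul]
    · simp only [hE, obj, Finset.sum_filter]
  have hnonneg : 0 ≤ ∑ i, (f.coeff (Finsupp.single i d) - ∑ α ∈ Delta d f, z α i) * x i ^ d :=
    Finset.sum_nonneg fun i _ =>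
      mul_nonneg (by linarith [hz2 i]) (hdeven.pow_nonneg _)
  have hdiff : ∑ i, (f.coeff (Finsupp.single i d) - ∑ α ∈ Delta d f, z α i) * x i ^ d
      = (∑ i, f.coeff (Finsupp.single i d) * x i ^ d)
        - ∑ i, (∑ α ∈ Delta d f, z α i) * x i ^ d := by
    rw [← Finset.sum_sub_distrib]
    exact Finset.sum_congr rfl fun i _ => by ring
  calc f.coeff 0 - obj d f z
      ≤ f.coeff 0 + (∑ i, f.coeff (Finsupp.single i d) * x i ^ d)
        - (∑ i, (∑ α ∈ Delta d f, z α i) * x i ^ d) - obj d f z := by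
        rw [hdiff] at hnonneg
        linarith
    _ = ∑ α ∈ f.support, g α := by rw [hsumg, hsplit]; ring
    _ ≤ ∑ α ∈ f.support, f.coeff α * ∏ i, x i ^ α i := Finset.sum_le_sum hge
    _ = eval x f := heval.symm

/-- if `z` is `f`-feasible then `f(x) ≥ f(0) - obj_f(z)` for all
`x ∈ ℝⁿ`; in particular `f(0) - ρ(f)` is a lower bound for `f` on `ℝⁿ`. -/
theorem stmt_2 (n d : ℕ) (hd2 : 2 ≤ d) (hdeven : Even d)
    (f : MvPolynomial (Fin n) ℝ) (hdeg : f.totalDegree ≤ d)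
    (z : (Fin n →₀ ℕ) → Fin n → ℝ) (hz : Feasible d f z) :
    (∀ x : Fin n → ℝ, f.coeff 0 - obj d f z ≤ eval x f) ∧
    (∀ x : Fin n → ℝ, gp d f ≤ ((eval x f : ℝ) : EReal)) := by
  constructor
  · exact fun x => key d hd2 hdeven f hdeg z hz x
  · intro x
    have hkey : ∀ z', Feasible d f z' → f.coeff 0 - eval x f ≤ obj d f z' := by
      intro z' hz'
      have := key d hd2 hdeven f hdeg z' hz' x
      linarith
    have h1 : ((f.coeff 0 - eval x f : ℝ) : EReal) ≤ rho d f := by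
      rw [rho]
      apply le_sInf
      rintro r ⟨z', hz', rfl⟩
      exact EReal.coe_le_coe_iff.mpr (hkey z' hz')
    have h2 : rho d f ≤ ((obj d f z : ℝ) : EReal) := by
      rw [rho]
      exact sInf_le ⟨z, hz, rfl⟩
    have hne_top : rho d f ≠ ⊤ := ne_top_of_le_ne_top (EReal.coe_ne_top _) h2
    have hne_bot : rho d f ≠ ⊥ := by
      intro h
      rw [h, le_bot_iff] at h1
      exact (EReal.coe_ne_bot _) h1
    have hcoet : rho d f = (((rho d f).toReal : ℝ) : EReal) :=
      (EReal.coe_toReal hne_top hne_bot).symm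
    rw [gp, hcoet, ← EReal.coe_sub, EReal.coe_le_coe_iff]
    have h1' : f.coeff 0 - eval x f ≤ (rho d f).toReal := by
      rw [hcoet] at h1
      exact_mod_cast h1
    linarith
end
end

section
/- Let m ≥ 1, I₁,…,I_m a partition of {1,…,n}, N_i > 0, d an even integer with d ≥ max(2, deg f), g_j := 1 − Σ_{i∈I_j}(x_i/N_i)^d, c_j := max({f_{d,i}·N_i^d : i ∈ I_j} ∪ {0}). If (z, μ) is feasible for program (3), then λ := (μ₁ − c₁, …, μ_m − c_m) lies in [0,∞)^m, Δ(G(λ)) = Δ(f) with G(λ)_α = f_α for all α ∈ Δ(f), and z is G(λ)-feasible with obj_{G(λ)}(z) = obj_f(z). -/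
open MvPolynomial Finset

noncomputable section

/-- `c_j = max({f_{d,i}·N_i^d : i ∈ I_j} ∪ {0})`. -/
def cval {n : ℕ} (d : ℕ) (f : MvPolynomial (Fin n) ℝ) (N : Fin n → ℝ)
    (Ij : Finset (Fin n)) : ℝ :=
  sSup (insert (0 : ℝ)
    ((fun i => f.coeff (Finsupp.single i d) * N i ^ d) '' (Ij : Set (Fin n))))

/-- Feasibility for program (3). -/
def Prog3Feasible {n m : ℕ} (d : ℕ) (f : MvPolynomial (Fin n) ℝ)
    (N : Fin n → ℝ) (I : Fin m → Finset (Fin n))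
    (z : (Fin n →₀ ℕ) → Fin n → ℝ) (μ : Fin m → ℝ) : Prop :=
  (∀ α ∈ Delta d f, ∀ i, 0 ≤ z α i ∧ (z α i = 0 ↔ α i = 0)) ∧
  (∀ j, 0 < μ j ∧ cval d f N (I j) ≤ μ j) ∧
  (∀ j, ∀ i ∈ I j,
    (∑ α ∈ Delta d f, z α i) +
      (cval d f N (I j) / N i ^ d - f.coeff (Finsupp.single i d)) ≤ μ j / N i ^ d) ∧
  (∀ α ∈ Delta d f, wt α = d →
    ∏ i ∈ univ.filter (fun i => 0 < α i), (z α i / (α i : ℝ)) ^ (α i) =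
      (f.coeff α / (d : ℝ)) ^ d)

/-- The optimal value `ρ₃` of program (3). -/
def rho3 {n m : ℕ} (d : ℕ) (f : MvPolynomial (Fin n) ℝ)
    (N : Fin n → ℝ) (I : Fin m → Finset (Fin n)) : EReal :=
  sInf {r : EReal | ∃ z μ, Prog3Feasible d f N I z μ ∧
    r = (((∑ j, μ j) + obj d f z : ℝ) : EReal)}

/-- A sum of squares of polynomials. -/
def IsSOS {n : ℕ} (p : MvPolynomial (Fin n) ℝ) : Prop :=
  ∃ (k : ℕ) (q : Fin k → MvPolynomial (Fin n) ℝ), p = ∑ i, q i ^ 2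

/-- `f - r = σ₀ + Σ σⱼ gⱼ` with each `σⱼ` SOS and `deg(σⱼ gⱼ) ≤ d` (`g₀ = 1`). -/
def HasSOSRep {n m : ℕ} (d : ℕ) (f : MvPolynomial (Fin n) ℝ)
    (g : Fin m → MvPolynomial (Fin n) ℝ) (r : ℝ) : Prop :=
  ∃ (σ₀ : MvPolynomial (Fin n) ℝ) (σ : Fin m → MvPolynomial (Fin n) ℝ),
    IsSOS σ₀ ∧ (∀ j, IsSOS (σ j)) ∧ σ₀.totalDegree ≤ d ∧
    (∀ j, (σ j * g j).totalDegree ≤ d) ∧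
    f - C r = σ₀ + ∑ j, σ j * g j

lemma g_coeff_ne {n : ℕ} (d : ℕ) (hd : d ≠ 0) (N : Fin n → ℝ) (Ij : Finset (Fin n))
    (α : Fin n →₀ ℕ) (h0 : α ≠ 0) (hs : ∀ i, α ≠ Finsupp.single i d) :
    (1 - ∑ i ∈ Ij, (C (N i)⁻¹ * X i) ^ d : MvPolynomial (Fin n) ℝ).coeff α = 0 := by
  rw [coeff_sub, coeff_sum]
  rw [coeff_one, if_neg (by simpa using (Ne.symm h0))]
  rw [Finset.sum_eq_zero, sub_zero]
  intro i _
  rw [mul_pow, ← C_pow, coeff_C_mul, coeff_X_pow,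
    if_neg (fun h => hs i h.symm), mul_zero]

lemma g_coeff_single {n : ℕ} (d : ℕ) (hd : d ≠ 0) (N : Fin n → ℝ) (Ij : Finset (Fin n))
    (i : Fin n) :
    (1 - ∑ i' ∈ Ij, (C (N i')⁻¹ * X i') ^ d : MvPolynomial (Fin n) ℝ).coeff
      (Finsupp.single i d) = if i ∈ Ij then -((N i)⁻¹) ^ d else 0 := by
  rw [coeff_sub, coeff_sum, coeff_one,
    if_neg (fun h => hd (by simpa using (Finsupp.single_eq_zero.mp h.symm)))]
  have : ∀ i' ∈ Ij, ((C (N i')⁻¹ * X i') ^ d : MvPolynomial (Fin n) ℝ).coeff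
      (Finsupp.single i d) = if i' = i then ((N i')⁻¹) ^ d else 0 := by
    intro i' _
    rw [mul_pow, ← C_pow, coeff_C_mul, coeff_X_pow]
    by_cases h : i' = i
    · simp [h]
    · rw [if_neg (fun hh => h ((Finsupp.single_left_inj hd).mp hh)), if_neg h, mul_zero]
  rw [Finset.sum_congr rfl this]
  by_cases hi : i ∈ Ij
  · rw [Finset.sum_ite_eq' Ij i (fun i' => ((N i')⁻¹) ^ d), if_pos hi, if_pos hi]
    ring
  · rw [Finset.sum_ite_eq' Ij i (fun i' => ((N i')⁻¹) ^ d), if_neg hi, if_neg hi]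
    ring

/-- a feasible point `(z, μ)` of program (3) yields `λ := μ - c ∈ [0,∞)^m`
with `Δ(G(λ)) = Δ(f)`, `G(λ)_α = f_α` on `Δ(f)`, `z` `G(λ)`-feasible, and
`obj_{G(λ)}(z) = obj_f(z)`. -/
theorem stmt_8 (n m d : ℕ) (hm : 1 ≤ m) (hd2 : 2 ≤ d) (hdeven : Even d)
    (f : MvPolynomial (Fin n) ℝ) (hf : f.totalDegree ≤ d)
    (N : Fin n → ℝ) (hN : ∀ i, 0 < N i)
    (I : Fin m → Finset (Fin n))
    (hne : ∀ j, (I j).Nonempty)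
    (hdisj : ∀ j k, j ≠ k → Disjoint (I j) (I k))
    (hcover : ∀ i, ∃ j, i ∈ I j)
    (g : Fin m → MvPolynomial (Fin n) ℝ)
    (hg : ∀ j, g j = 1 - ∑ i ∈ I j, (C (N i)⁻¹ * X i) ^ d)
    (z : (Fin n →₀ ℕ) → Fin n → ℝ) (μ : Fin m → ℝ)
    (hfeas : Prog3Feasible d f N I z μ) :
    (∀ j, 0 ≤ μ j - cval d f N (I j)) ∧
    Delta d (f - ∑ j, C (μ j - cval d f N (I j)) * g j) = Delta d f ∧
    (∀ α ∈ Delta d f,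
      (f - ∑ j, C (μ j - cval d f N (I j)) * g j).coeff α = f.coeff α) ∧
    Feasible d (f - ∑ j, C (μ j - cval d f N (I j)) * g j) z ∧
    obj d (f - ∑ j, C (μ j - cval d f N (I j)) * g j) z = obj d f z := by
  have hd0 : d ≠ 0 := by omega
  obtain ⟨hz, hμ, hsum, hprod⟩ := hfeas
  set lam : Fin m → ℝ := fun j => μ j - cval d f N (I j) with hlam
  set G : MvPolynomial (Fin n) ℝ := f - ∑ j, C (lam j) * g j with hG
  -- coefficient of G at generic α
  have hcoeff : ∀ α : Fin n →₀ ℕ, α ≠ 0 → (∀ i, α ≠ Finsupp.single i d) →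
      G.coeff α = f.coeff α := by
    intro α h0 hs
    rw [hG, coeff_sub, coeff_sum]
    rw [Finset.sum_eq_zero, sub_zero]
    intro j _
    rw [coeff_C_mul, hg j, g_coeff_ne d hd0 N (I j) α h0 hs, mul_zero]
  -- coefficient of G at single i d
  have hcsingle : ∀ (i : Fin n) (j : Fin m), i ∈ I j →
      G.coeff (Finsupp.single i d) =
        f.coeff (Finsupp.single i d) + lam j * ((N i)⁻¹) ^ d := by
    intro i j hij
    rw [hG, coeff_sub, coeff_sum]
    have : ∀ j' ∈ (univ : Finset (Fin m)),
        (C (lam j') * g j').coeff (Finsupp.single i d) =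
        if j' = j then -(lam j * ((N i)⁻¹) ^ d) else 0 := by
      intro j' _
      rw [coeff_C_mul, hg j', g_coeff_single d hd0 N (I j') i]
      by_cases h : j' = j
      · subst h; rw [if_pos hij, if_pos rfl]; ring
      · rw [if_neg (fun hi => Finset.disjoint_left.mp (hdisj j' j h) hi hij), if_neg h, mul_zero]
    rw [Finset.sum_congr rfl this, Finset.sum_ite_eq' univ j
      (fun _ => -(lam j * ((N i)⁻¹) ^ d)), if_pos (mem_univ j)]
    ring
  -- Delta equality
  have hDelta : Delta d G = Delta d f := by
    ext α
    simp only [Delta, Finset.mem_filter, mem_support_iff]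
    constructor
    · rintro ⟨hne0, hw, h0, hs, hsq⟩
      rw [hcoeff α h0 hs] at hne0 hsq
      exact ⟨hne0, hw, h0, hs, hsq⟩
    · rintro ⟨hne0, hw, h0, hs, hsq⟩
      rw [← hcoeff α h0 hs] at hne0 hsq
      exact ⟨hne0, hw, h0, hs, hsq⟩
  have hcoeffD : ∀ α ∈ Delta d f, G.coeff α = f.coeff α := by
    intro α hα
    simp only [Delta, Finset.mem_filter] at hα
    exact hcoeff α hα.2.2.1 hα.2.2.2.1
  have hlam0 : ∀ j, 0 ≤ lam j := fun j => sub_nonneg.mpr (hμ j).2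
  refine ⟨hlam0, hDelta, hcoeffD, ⟨?_, ?_, ?_⟩, ?_⟩
  · rw [hDelta]; exact hz
  · intro i
    rw [hDelta]
    obtain ⟨j, hij⟩ := hcover i
    rw [hcsingle i j hij]
    have hNd : (0:ℝ) < N i ^ d := pow_pos (hN i) d
    have h3 := hsum j i hij
    have hinv : ((N i)⁻¹) ^ d = (N i ^ d)⁻¹ := by rw [inv_pow]
    rw [hinv, hlam]
    have : (μ j - cval d f N (I j)) * (N i ^ d)⁻¹
        = μ j / N i ^ d - cval d f N (I j) / N i ^ d := by
      field_simp
    rw [this]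
    linarith [h3]
  · intro α hα hw
    rw [hDelta] at hα
    rw [hcoeffD α hα]
    exact hprod α hα hw
  · unfold obj
    rw [hDelta]
    refine Finset.sum_congr rfl fun α hα => ?_
    rw [hcoeffD α (Finset.mem_filter.mp hα).1]
end
end

section
/- Let m ≥ 1, I₁,…,I_m a partition of {1,…,n}, N_i > 0, d an even integer with d ≥ max(2, deg f), g_j := 1 − Σ_{i∈I_j}(x_i/N_i)^d, c_j := max({f_{d,i}·N_i^d : i ∈ I_j} ∪ {0}). Let λ ∈ [0,∞)^m, let z be G(λ)-feasible, and let ε > 0. Define μ_j := λ_j + ε/m + c_j for j = 1,…,m. Then (z, μ) is feasible for program (3). -/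
open MvPolynomial Finset

noncomputable section

/-- from a `G(λ)`-feasible `z` and `ε > 0`, the pair `(z, μ)` with
`μⱼ = λⱼ + ε/m + cⱼ` is feasible for program (3). -/
theorem stmt_9 (n m d : ℕ) (hm : 1 ≤ m) (hd2 : 2 ≤ d) (hdeven : Even d)
    (f : MvPolynomial (Fin n) ℝ) (hf : f.totalDegree ≤ d)
    (N : Fin n → ℝ) (hN : ∀ i, 0 < N i)
    (I : Fin m → Finset (Fin n))
    (hne : ∀ j, (I j).Nonempty)
    (hdisj : ∀ j k, j ≠ k → Disjoint (I j) (I k))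
    (hcover : ∀ i, ∃ j, i ∈ I j)
    (g : Fin m → MvPolynomial (Fin n) ℝ)
    (hg : ∀ j, g j = 1 - ∑ i ∈ I j, (C (N i)⁻¹ * X i) ^ d)
    (lam : Fin m → ℝ) (hlam : ∀ j, 0 ≤ lam j)
    (z : (Fin n →₀ ℕ) → Fin n → ℝ)
    (hz : Feasible d (f - ∑ j, C (lam j) * g j) z)
    (ε : ℝ) (hε : 0 < ε)
    (μ : Fin m → ℝ) (hμ : ∀ j, μ j = lam j + ε / m + cval d f N (I j)) :
    Prog3Feasible d f N I z μ := by
  have hd0 : d ≠ 0 := by omega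
  set G := f - ∑ j, C (lam j) * g j with hG
  have hgcoeff : ∀ j α, (g j).coeff α =
      (if α = 0 then (1:ℝ) else 0) -
        ∑ i ∈ I j, (if Finsupp.single i d = α then ((N i)⁻¹)^d else 0) := by
    intro j α
    rw [hg j]
    rw [coeff_sub, coeff_sum]
    congr 1
    · simp [coeff_one, eq_comm]
    · refine Finset.sum_congr rfl fun i _ => ?_
      rw [mul_pow, ← C_pow, coeff_C_mul, coeff_X_pow]
      by_cases h : Finsupp.single i d = α <;> simp [h]
  have hGcoeff : ∀ α, α ≠ 0 → (∀ i, α ≠ Finsupp.single i d) →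
      G.coeff α = f.coeff α := by
    intro α h0 hs
    have hs' : ∀ i, Finsupp.single i d ≠ α := fun i h => hs i h.symm
    rw [hG, coeff_sub, coeff_sum]
    have : ∀ j : Fin m, (C (lam j) * g j).coeff α = 0 := by
      intro j
      rw [coeff_C_mul, hgcoeff]
      simp [h0, hs']
    simp [this]
  have hGd : ∀ j : Fin m, ∀ i ∈ I j,
      G.coeff (Finsupp.single i d) =
        f.coeff (Finsupp.single i d) + lam j * ((N i)⁻¹)^d := by
    intro j i hi
    rw [hG, coeff_sub, coeff_sum]
    have hsingle : (Finsupp.single i d : Fin n →₀ ℕ) ≠ 0 := by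
      simp [Finsupp.single_eq_zero, hd0]
    have hterm : ∀ j' : Fin m, (C (lam j') * g j').coeff (Finsupp.single i d) =
        - (if i ∈ I j' then lam j' * ((N i)⁻¹)^d else 0) := by
      intro j'
      rw [coeff_C_mul, hgcoeff]
      have hiff : ∀ i' : Fin n,
          (Finsupp.single i' d = Finsupp.single i d) ↔ i' = i := by
        intro i'
        constructor
        · intro h
          exact (Finsupp.single_left_inj hd0).mp h
        · rintro rfl; rfl
      have : ∑ i' ∈ I j', (if Finsupp.single i' d = Finsupp.single i d
            then ((N i')⁻¹)^d else 0) =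
          if i ∈ I j' then ((N i)⁻¹)^d else 0 := by
        rw [Finset.sum_congr rfl fun i' _ => by rw [if_congr (hiff i') rfl rfl]]
        exact Finset.sum_ite_eq' (I j') i (fun i' => ((N i')⁻¹)^d)
      rw [this]
      simp only [if_neg hsingle, zero_sub, mul_neg]
      by_cases h : i ∈ I j' <;> simp [h]
    rw [Finset.sum_congr rfl fun j' _ => hterm j']
    have hdisj' : ∀ j' : Fin m, (if i ∈ I j' then lam j' * ((N i)⁻¹)^d else 0) =
        if j' = j then lam j * ((N i)⁻¹)^d else 0 := by
      intro j'
      by_cases h : j' = j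
      · subst h; simp [hi]
      · have : i ∉ I j' := fun hmem =>
          (Finset.disjoint_left.mp (hdisj j' j h) hmem) hi
        simp [this, h]
    rw [Finset.sum_neg_distrib, Finset.sum_congr rfl fun j' _ => hdisj' j',
      Finset.sum_ite_eq' univ j (fun _ => lam j * ((N i)⁻¹)^d)]
    simp
  have hDelta : Delta d G = Delta d f := by
    ext α
    simp only [Delta, mem_filter, mem_support_iff]
    constructor
    · rintro ⟨hne, hwt, h0, hs, hsign⟩
      rw [hGcoeff α h0 hs] at hne hsign
      exact ⟨hne, hwt, h0, hs, hsign⟩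
    · rintro ⟨hne, hwt, h0, hs, hsign⟩
      rw [← hGcoeff α h0 hs] at hne hsign
      exact ⟨hne, hwt, h0, hs, hsign⟩
  have hc0 : ∀ j, 0 ≤ cval d f N (I j) := by
    intro j
    refine le_csSup ?_ (Set.mem_insert _ _)
    exact Set.Finite.bddAbove (((I j).finite_toSet.image _).insert 0)
  have hm' : (0:ℝ) < (m:ℝ) := by exact_mod_cast Nat.lt_of_lt_of_le Nat.zero_lt_one hm
  have hεm : 0 < ε / m := div_pos hε hm'
  obtain ⟨hz1, hz2, hz3⟩ := hz
  rw [hDelta] at hz1 hz2 hz3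
  refine ⟨hz1, ?_, ?_, ?_⟩
  · intro j
    have := hlam j
    have := hc0 j
    constructor <;> [rw [hμ]; rw [hμ]] <;> linarith
  · intro j i hi
    have hNd : (0:ℝ) < N i ^ d := pow_pos (hN i) d
    have h1 : ∑ α ∈ Delta d f, z α i ≤
        f.coeff (Finsupp.single i d) + lam j * ((N i)⁻¹)^d := by
      have := hz2 i
      rwa [hGd j i hi] at this
    have hinv : lam j * ((N i)⁻¹)^d = lam j / N i ^ d := by
      rw [inv_pow, div_eq_mul_inv]
    have h2 : (lam j + cval d f N (I j)) / N i ^ d ≤ μ j / N i ^ d := by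
      have hle : lam j + cval d f N (I j) ≤ μ j := by rw [hμ]; linarith
      gcongr
    have h3 : (lam j + cval d f N (I j)) / N i ^ d =
        lam j / N i ^ d + cval d f N (I j) / N i ^ d := add_div _ _ _
    linarith [h1, hinv ▸ h1]
  · intro α hα hwt
    have hmem := Finset.mem_filter.mp hα
    obtain ⟨_, h0, hs, _⟩ := hmem.2
    rw [← hGcoeff α h0 hs]
    exact hz3 α hα hwt
end
end

section
/- (Theorem 4.1(2)) Let d be an even integer with d ≥ max(2, deg f), let N₁,…,Nₙ > 0, and let g := (1−(x₁/N₁)^d, …, 1−(xₙ/Nₙ)^d). If f_{d,i} ≤ 0 for every i = 1,…,n (in particular whenever deg f < d), then s(f,g) = f_{tr,N}. -/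
open MvPolynomial Finset

noncomputable section

section Stmt11Aux

variable {n : ℕ}

lemma wt_sum (α : Fin n →₀ ℕ) : wt α = ∑ i, α i :=
  Finsupp.sum_fintype α _ (fun _ => rfl)

lemma coeff_G (d : ℕ) (N : Fin n → ℝ) (g : Fin n → MvPolynomial (Fin n) ℝ)
    (hg : ∀ i, g i = 1 - (C (N i)⁻¹ * X i) ^ d) (lam : Fin n → ℝ)
    (f : MvPolynomial (Fin n) ℝ) (α : Fin n →₀ ℕ) :
    (f - ∑ j, C (lam j) * g j).coeff α =
      f.coeff α - (if 0 = α then ∑ j, lam j else 0)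
        + ∑ j, lam j * ((N j)⁻¹) ^ d * (if Finsupp.single j d = α then 1 else 0) := by
  classical
  have hterm : ∀ j : Fin n, (C (lam j) * g j).coeff α
      = lam j * (if 0 = α then 1 else 0)
        - lam j * ((N j)⁻¹) ^ d * (if Finsupp.single j d = α then 1 else 0) := by
    intro j
    rw [coeff_C_mul, hg j, coeff_sub, coeff_one, mul_pow, ← C_pow, coeff_C_mul, coeff_X_pow]
    ring
  rw [coeff_sub, coeff_sum, Finset.sum_congr rfl (fun j _ => hterm j),
    Finset.sum_sub_distrib]
  by_cases h0 : (0 : Fin n →₀ ℕ) = α <;> simp [h0] <;> ring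

lemma coeff_G_ne {d : ℕ} (hd : d ≠ 0) (N : Fin n → ℝ) (g : Fin n → MvPolynomial (Fin n) ℝ)
    (hg : ∀ i, g i = 1 - (C (N i)⁻¹ * X i) ^ d) (lam : Fin n → ℝ)
    (f : MvPolynomial (Fin n) ℝ) (α : Fin n →₀ ℕ)
    (hα0 : α ≠ 0) (hαs : ∀ i, α ≠ Finsupp.single i d) :
    (f - ∑ j, C (lam j) * g j).coeff α = f.coeff α := by
  rw [coeff_G d N g hg lam f α, if_neg (fun h => hα0 h.symm),
    Finset.sum_eq_zero (fun j _ => by rw [if_neg (fun h => hαs j h.symm), mul_zero])]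
  ring

lemma coeff_G_zero {d : ℕ} (hd : d ≠ 0) (N : Fin n → ℝ) (g : Fin n → MvPolynomial (Fin n) ℝ)
    (hg : ∀ i, g i = 1 - (C (N i)⁻¹ * X i) ^ d) (lam : Fin n → ℝ)
    (f : MvPolynomial (Fin n) ℝ) :
    (f - ∑ j, C (lam j) * g j).coeff 0 = f.coeff 0 - ∑ j, lam j := by
  have hz : ∑ j, lam j * ((N j)⁻¹) ^ d *
      (if Finsupp.single j d = (0 : Fin n →₀ ℕ) then 1 else 0) = 0 :=
    Finset.sum_eq_zero (fun j _ => by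
      rw [if_neg (fun h => hd (Finsupp.single_eq_zero.mp h)), mul_zero])
  rw [coeff_G d N g hg lam f 0, if_pos rfl, hz]
  ring

lemma coeff_G_single {d : ℕ} (hd : d ≠ 0) (N : Fin n → ℝ) (g : Fin n → MvPolynomial (Fin n) ℝ)
    (hg : ∀ i, g i = 1 - (C (N i)⁻¹ * X i) ^ d) (lam : Fin n → ℝ)
    (f : MvPolynomial (Fin n) ℝ) (i : Fin n) :
    (f - ∑ j, C (lam j) * g j).coeff (Finsupp.single i d)
      = f.coeff (Finsupp.single i d) + lam i * ((N i)⁻¹) ^ d := by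
  classical
  have hz : ∑ j, lam j * ((N j)⁻¹) ^ d *
      (if Finsupp.single j d = Finsupp.single i d then 1 else 0)
      = lam i * ((N i)⁻¹) ^ d := by
    rw [Finset.sum_eq_single i
      (fun j _ hj => by
        rw [if_neg (fun h => hj (Finsupp.single_left_injective hd h)), mul_zero])
      (fun h => absurd (Finset.mem_univ i) h), if_pos rfl, mul_one]
  rw [coeff_G d N g hg lam f _,
    if_neg (fun h => hd (Finsupp.single_eq_zero.mp h.symm)), hz]
  ring

lemma Delta_G {d : ℕ} (hd : d ≠ 0) (N : Fin n → ℝ) (g : Fin n → MvPolynomial (Fin n) ℝ)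
    (hg : ∀ i, g i = 1 - (C (N i)⁻¹ * X i) ^ d) (lam : Fin n → ℝ)
    (f : MvPolynomial (Fin n) ℝ) :
    Delta d (f - ∑ j, C (lam j) * g j) = Delta d f := by
  ext α
  simp only [Delta, Finset.mem_filter, MvPolynomial.mem_support_iff]
  constructor
  · rintro ⟨hc, hwt, h0, hs, hneg⟩
    rw [coeff_G_ne hd N g hg lam f α h0 hs] at hc hneg
    exact ⟨hc, hwt, h0, hs, hneg⟩
  · rintro ⟨hc, hwt, h0, hs, hneg⟩
    rw [← coeff_G_ne hd N g hg lam f α h0 hs] at hc hneg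
    exact ⟨hc, hwt, h0, hs, hneg⟩

lemma prod_single_pow (N : Fin n → ℝ) (i : Fin n) (d : ℕ) :
    ∏ j, N j ^ (Finsupp.single i d j) = N i ^ d := by
  classical
  rw [Finset.prod_eq_single i (fun j _ hj => by
      rw [Finsupp.single_apply, if_neg (fun h => hj h.symm), pow_zero])
    (fun h => absurd (Finset.mem_univ i) h), Finsupp.single_apply, if_pos rfl]

lemma Delta'_split {d : ℕ} (hd2 : 2 ≤ d) (f : MvPolynomial (Fin n) ℝ)
    (hf : f.totalDegree ≤ d) (hfd : ∀ i, f.coeff (Finsupp.single i d) ≤ 0)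
    (F : (Fin n →₀ ℕ) → ℝ) (hF : ∀ α, f.coeff α = 0 → F α = 0) :
    ∑ α ∈ Delta' f, F α = (∑ i, F (Finsupp.single i d)) + ∑ α ∈ Delta d f, F α := by
  classical
  have hd0 : d ≠ 0 := by omega
  set U : Finset (Fin n →₀ ℕ) :=
    (Finset.univ.image fun i => Finsupp.single i d) ∪ Delta d f with hU
  have hDsub : Delta d f ⊆ Delta' f := by
    intro α hα
    simp only [Delta, Delta', Finset.mem_filter] at hα ⊢
    exact ⟨hα.1, hα.2.2.1, hα.2.2.2.2⟩
  have hsub : Delta' f ⊆ U := by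
    intro α hα
    simp only [Delta', Finset.mem_filter, MvPolynomial.mem_support_iff] at hα
    by_cases hs : ∃ i, α = Finsupp.single i d
    · obtain ⟨i, rfl⟩ := hs
      exact Finset.mem_union_left _ (Finset.mem_image.mpr ⟨i, Finset.mem_univ i, rfl⟩)
    · push_neg at hs
      refine Finset.mem_union_right _ ?_
      simp only [Delta, Finset.mem_filter, MvPolynomial.mem_support_iff]
      refine ⟨hα.1, ?_, hα.2.1, hs, hα.2.2⟩
      exact le_trans (MvPolynomial.le_totalDegree
        (MvPolynomial.mem_support_iff.mpr hα.1)) hf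
  have hvanish : ∀ β ∈ U, β ∉ Delta' f → F β = 0 := by
    intro β hβ hβ'
    rcases Finset.mem_union.mp hβ with hβ1 | hβ2
    · obtain ⟨i, _, rfl⟩ := Finset.mem_image.mp hβ1
      by_contra hne
      have hc : f.coeff (Finsupp.single i d) ≠ 0 := fun h => hne (hF _ h)
      apply hβ'
      simp only [Delta', Finset.mem_filter, MvPolynomial.mem_support_iff]
      exact ⟨hc, fun h => hd0 (Finsupp.single_eq_zero.mp h),
        Or.inl (lt_of_le_of_ne (hfd i) hc)⟩
    · exact absurd (hDsub hβ2) hβ'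
  rw [Finset.sum_subset hsub hvanish, hU, Finset.sum_union, Finset.sum_image]
  · intro i _ j _ h
    exact Finsupp.single_left_injective hd0 h
  · rw [Finset.disjoint_left]
    rintro β hβ1 hβ2
    obtain ⟨i, _, rfl⟩ := Finset.mem_image.mp hβ1
    simp only [Delta, Finset.mem_filter] at hβ2
    exact hβ2.2.2.2.1 i rfl

end Stmt11Aux


section Stmt11AMGM

variable {n : ℕ}

lemma amgm_key (d : ℕ) (hd2 : 2 ≤ d) (hdeven : Even d)
    (α : Fin n →₀ ℕ) (hwt : wt α ≤ d) (c : ℝ) (z N : Fin n → ℝ)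
    (hN : ∀ i, 0 < N i) (hz0 : ∀ i, 0 ≤ z i) (hziff : ∀ i, z i = 0 ↔ α i = 0)
    (hprod : wt α = d →
      ∏ i ∈ univ.filter (fun i => 0 < α i), (z i / (α i : ℝ)) ^ (α i) = (c / (d : ℝ)) ^ d) :
    |c| * ∏ i, N i ^ (α i) ≤ (∑ i, z i * N i ^ d) + ((d : ℝ) - (wt α : ℝ)) *
      (if wt α < d then ((c / (d : ℝ)) ^ d *
        ∏ i ∈ univ.filter (fun i => 0 < α i), ((α i : ℝ) / z i) ^ (α i)) ^
          ((1 : ℝ) / ((d : ℝ) - (wt α : ℝ)))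
       else 1) := by
  classical
  have hd0 : (0 : ℝ) < d := by exact_mod_cast (by omega : 0 < d)
  set F := univ.filter (fun i : Fin n => 0 < α i) with hF
  set Q := ∏ i ∈ F, ((α i : ℝ) / z i) ^ (α i) with hQ
  set P := ∏ i ∈ F, (z i / (α i : ℝ)) ^ (α i) with hPdef
  set M := ∏ i, N i ^ (α i) with hMdef
  set e := (d : ℝ) - (wt α : ℝ) with he
  have he0 : 0 ≤ e := by
    rw [he, sub_nonneg]
    exact_mod_cast hwt
  have hQ0 : 0 ≤ Q :=
    Finset.prod_nonneg fun i _ => pow_nonneg (div_nonneg (Nat.cast_nonneg _) (hz0 i)) _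
  have hbase0 : 0 ≤ (c / (d : ℝ)) ^ d * Q := mul_nonneg (hdeven.pow_nonneg _) hQ0
  set t := (if wt α < d then ((c / (d : ℝ)) ^ d * Q) ^ ((1 : ℝ) / e) else 1) with ht
  have ht0 : 0 ≤ t := by
    rw [ht]; split
    · exact Real.rpow_nonneg hbase0 _
    · norm_num
  have hM0 : 0 < M :=
    Finset.prod_pos fun i _ => pow_pos (hN i) _
  have hP0 : 0 ≤ P :=
    Finset.prod_nonneg fun i _ => pow_nonneg (div_nonneg (hz0 i) (Nat.cast_nonneg _)) _
  -- the key identity P * t ^ e = (c/d)^d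
  have hPt : P * t ^ e = (c / (d : ℝ)) ^ d := by
    rcases lt_or_eq_of_le hwt with hwtlt | hwtd
    · have hepos : 0 < e := by
        rw [he, sub_pos]; exact_mod_cast hwtlt
      rw [ht, if_pos hwtlt, ← Real.rpow_mul hbase0, one_div,
        inv_mul_cancel₀ hepos.ne', Real.rpow_one]
      have hPQ : P * Q = 1 := by
        rw [hPdef, hQ, ← Finset.prod_mul_distrib]
        apply Finset.prod_eq_one
        intro i hi
        have hαi : 0 < α i := (Finset.mem_filter.mp hi).2
        have hzi : 0 < z i :=
          lt_of_le_of_ne (hz0 i) (fun h => by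
            exact absurd ((hziff i).mp h.symm) (by omega))
        rw [← mul_pow, div_mul_div_comm, mul_comm (z i),
          div_self (by positivity), one_pow]
      calc P * ((c / (d : ℝ)) ^ d * Q) = P * Q * (c / (d : ℝ)) ^ d := by ring
        _ = (c / (d : ℝ)) ^ d := by rw [hPQ, one_mul]
    · have he0' : e = 0 := by rw [he, hwtd, sub_self]
      rw [he0', Real.rpow_zero, mul_one]
      exact hprod hwtd
  -- set up weighted AM-GM on Fin n ⊕ Unit
  set w : Fin n ⊕ Unit → ℝ := Sum.elim (fun i => (α i : ℝ) / d) (fun _ => e / d) with hw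
  set v : Fin n ⊕ Unit → ℝ :=
    Sum.elim (fun i => z i * N i ^ d * d / (α i : ℝ)) (fun _ => d * t) with hv
  have hw0 : ∀ j ∈ (univ : Finset (Fin n ⊕ Unit)), 0 ≤ w j := by
    rintro (i | u) _
    · simp only [hw, Sum.elim_inl]; positivity
    · simp only [hw, Sum.elim_inr]; positivity
  have hwsum : ∑ j, w j = 1 := by
    rw [hw, Fintype.sum_sum_type]
    simp only [Sum.elim_inl, Sum.elim_inr]
    have hsα : ∑ i, ((α i : ℝ)) = (wt α : ℝ) := by
      rw [wt_sum α, Nat.cast_sum]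
    rw [Finset.sum_const, ← Finset.sum_div, hsα]
    simp only [Finset.card_univ, Fintype.card_unit, one_smul]
    rw [he]; field_simp; ring
  have hv0 : ∀ j ∈ (univ : Finset (Fin n ⊕ Unit)), 0 ≤ v j := by
    rintro (i | u) _
    · simp only [hv, Sum.elim_inl]
      have := hz0 i
      have := (hN i).le
      positivity
    · simp only [hv, Sum.elim_inr]
      positivity
  have amgm := Real.geom_mean_le_arith_mean_weighted univ w v hw0 hwsum hv0
  -- compute the arithmetic mean
  have hrhs : ∑ j, w j * v j = (∑ i, z i * N i ^ d) + e * t := by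
    rw [Fintype.sum_sum_type]
    simp only [hw, hv, Sum.elim_inl, Sum.elim_inr]
    rw [Finset.sum_const]
    simp only [Finset.card_univ, Fintype.card_unit, one_smul]
    congr 1
    · apply Finset.sum_congr rfl
      intro i _
      by_cases hαi : α i = 0
      · have hzi : z i = 0 := (hziff i).mpr hαi
        simp [hαi, hzi]
      · have hαi' : ((α i : ℝ)) ≠ 0 := Nat.cast_ne_zero.mpr hαi
        field_simp
    · field_simp
  -- compute the geometric mean
  have hlhs : ∏ j, v j ^ w j = |c| * M := by
    rw [Fintype.prod_sum_type]
    simp only [hv, hw, Sum.elim_inl, Sum.elim_inr]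
    rw [Finset.prod_const]
    simp only [Finset.card_univ, Fintype.card_unit, pow_one]
    have hx0 : ∀ i : Fin n, 0 ≤ z i * N i ^ d * (d : ℝ) / (α i : ℝ) := by
      intro i
      have := hz0 i; have := (hN i).le
      positivity
    have h1 : ∀ i : Fin n, (z i * N i ^ d * (d : ℝ) / (α i : ℝ)) ^ ((α i : ℝ) / d)
        = ((z i * N i ^ d * (d : ℝ) / (α i : ℝ)) ^ (α i)) ^ ((1 : ℝ) / d) := by
      intro i
      rw [← Real.rpow_natCast (z i * N i ^ d * (d : ℝ) / (α i : ℝ)) (α i),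
        ← Real.rpow_mul (hx0 i), mul_one_div]
    have h2 : ∏ i, (z i * N i ^ d * (d : ℝ) / (α i : ℝ)) ^ (α i)
        = P * M ^ d * (d : ℝ) ^ (wt α) := by
      rw [← Finset.prod_subset (Finset.subset_univ F) (fun i _ hi => by
        have hαi : α i = 0 := by
          by_contra hne
          exact hi (Finset.mem_filter.mpr ⟨Finset.mem_univ i, Nat.pos_of_ne_zero hne⟩)
        rw [hαi, pow_zero])]
      have hcong : ∀ i ∈ F, (z i * N i ^ d * (d : ℝ) / (α i : ℝ)) ^ (α i)
          = (z i / (α i : ℝ)) ^ (α i) * (N i ^ (α i)) ^ d * (d : ℝ) ^ (α i) := by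
        intro i hi
        have : z i * N i ^ d * (d : ℝ) / (α i : ℝ) = z i / (α i : ℝ) * N i ^ d * d := by
          ring
        rw [this, mul_pow, mul_pow, pow_right_comm]
      rw [Finset.prod_congr rfl hcong, Finset.prod_mul_distrib, Finset.prod_mul_distrib]
      have hN2 : ∏ i ∈ F, (N i ^ α i) ^ d = M ^ d := by
        rw [hMdef, ← Finset.prod_pow]
        exact Finset.prod_subset (Finset.subset_univ F) (fun i _ hi => by
          have hαi : α i = 0 := by
            by_contra hne
            exact hi (Finset.mem_filter.mpr ⟨Finset.mem_univ i, Nat.pos_of_ne_zero hne⟩)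
          rw [hαi, pow_zero, one_pow])
      have hdwt : ∏ i ∈ F, (d : ℝ) ^ α i = (d : ℝ) ^ (wt α) := by
        rw [Finset.prod_pow_eq_pow_sum]
        congr 1
        rw [wt_sum α]
        exact Finset.sum_subset (Finset.subset_univ F) (fun i _ hi => by
          by_contra hne
          exact hi (Finset.mem_filter.mpr ⟨Finset.mem_univ i, Nat.pos_of_ne_zero hne⟩))
      rw [hN2, hdwt, hPdef]
    have h3 : ((d : ℝ) * t) ^ (e / d) = ((d : ℝ) ^ e * t ^ e) ^ ((1 : ℝ) / d) := by
      rw [← mul_one_div e d, Real.rpow_mul (by positivity),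
        Real.mul_rpow hd0.le ht0]
    calc (∏ i, (z i * N i ^ d * (d : ℝ) / (α i : ℝ)) ^ ((α i : ℝ) / d)) * ((d : ℝ) * t) ^ (e / d)
        = (∏ i, ((z i * N i ^ d * (d : ℝ) / (α i : ℝ)) ^ (α i)) ^ ((1 : ℝ) / d)) *
          ((d : ℝ) ^ e * t ^ e) ^ ((1 : ℝ) / d) := by
          rw [Finset.prod_congr rfl (fun i _ => h1 i), h3]
      _ = ((P * M ^ d * (d : ℝ) ^ (wt α)) ^ ((1 : ℝ) / d)) *
          ((d : ℝ) ^ e * t ^ e) ^ ((1 : ℝ) / d) := by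
          rw [Real.finset_prod_rpow univ _ (fun i _ => pow_nonneg (hx0 i) _), h2]
      _ = ((P * M ^ d * (d : ℝ) ^ (wt α) * ((d : ℝ) ^ e * t ^ e)) ^ ((1 : ℝ) / d)) := by
          rw [← Real.mul_rpow (by positivity)
            (mul_nonneg (Real.rpow_nonneg hd0.le _) (Real.rpow_nonneg ht0 _))]
      _ = ((|c| * M) ^ d) ^ ((1 : ℝ) / d) := by
          congr 1
          have hde : (d : ℝ) ^ (wt α) * (d : ℝ) ^ e = (d : ℝ) ^ (d : ℕ) := by
            have hwe : (wt α : ℝ) + e = (d : ℝ) := by rw [he]; ring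
            rw [← Real.rpow_natCast (d : ℝ) (wt α), ← Real.rpow_add hd0, hwe,
              Real.rpow_natCast]
          have habs : (c / (d : ℝ)) ^ d = (|c| / (d : ℝ)) ^ d := by
            rw [← hdeven.pow_abs (c / (d : ℝ)), abs_div, abs_of_pos hd0]
          calc P * M ^ d * (d : ℝ) ^ (wt α) * ((d : ℝ) ^ e * t ^ e)
              = (P * t ^ e) * M ^ d * ((d : ℝ) ^ (wt α) * (d : ℝ) ^ e) := by ring
            _ = (c / (d : ℝ)) ^ d * M ^ d * (d : ℝ) ^ (d : ℕ) := by rw [hPt, hde]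
            _ = (|c| / (d : ℝ) * M * (d : ℝ)) ^ d := by
                rw [habs, mul_pow, mul_pow]
            _ = (|c| * M) ^ d := by
                congr 1
                field_simp
      _ = |c| * M := by
          rw [← Real.rpow_natCast (|c| * M) d, ← Real.rpow_mul (by positivity),
            mul_one_div, div_self hd0.ne', Real.rpow_one]
  rw [hlhs] at amgm
  rw [hrhs] at amgm
  exact amgm


section Stmt11LB

variable {n : ℕ}

lemma lower_bound (d : ℕ) (hd2 : 2 ≤ d) (hdeven : Even d)
    (f : MvPolynomial (Fin n) ℝ) (hf : f.totalDegree ≤ d)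
    (N : Fin n → ℝ) (hN : ∀ i, 0 < N i)
    (g : Fin n → MvPolynomial (Fin n) ℝ)
    (hg : ∀ i, g i = 1 - (C (N i)⁻¹ * X i) ^ d)
    (hfd : ∀ i, f.coeff (Finsupp.single i d) ≤ 0)
    (lam : Fin n → ℝ) (z : (Fin n →₀ ℕ) → Fin n → ℝ)
    (hz : Feasible d (f - ∑ j, C (lam j) * g j) z) :
    ∑ α ∈ Delta' f, |f.coeff α| * ∏ i, N i ^ (α i) ≤
      obj d (f - ∑ j, C (lam j) * g j) z + ∑ j, lam j := by
  classical
  have hd0 : d ≠ 0 := by omega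
  set G := f - ∑ j, C (lam j) * g j with hG
  have hDG : Delta d G = Delta d f := Delta_G hd0 N g hg lam f
  obtain ⟨hz1, hz2, hz3⟩ := hz
  rw [hDG] at hz1 hz2 hz3
  have hcoe : ∀ α ∈ Delta d f, G.coeff α = f.coeff α := by
    intro α hα
    simp only [Delta, Finset.mem_filter] at hα
    exact coeff_G_ne hd0 N g hg lam f α hα.2.2.1 hα.2.2.2.1
  -- bound on each lam i
  have hlam : ∀ i, N i ^ d * (∑ α ∈ Delta d f, z α i)
      + N i ^ d * |f.coeff (Finsupp.single i d)| ≤ lam i := by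
    intro i
    have h2 := hz2 i
    rw [coeff_G_single hd0 N g hg lam f i] at h2
    have habs : |f.coeff (Finsupp.single i d)| = - f.coeff (Finsupp.single i d) :=
      abs_of_nonpos (hfd i)
    have hNpos : (0 : ℝ) < N i ^ d := pow_pos (hN i) d
    have hkey : N i ^ d * ((∑ α ∈ Delta d f, z α i) - f.coeff (Finsupp.single i d))
        ≤ N i ^ d * (lam i * ((N i)⁻¹) ^ d) :=
      mul_le_mul_of_nonneg_left (by linarith) hNpos.le
    have hsimp : N i ^ d * (lam i * ((N i)⁻¹) ^ d) = lam i := by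
      rw [inv_pow]
      field_simp
    rw [hsimp, mul_sub] at hkey
    rw [habs]
    linarith [hkey]
  -- per-α AM-GM bound
  have hper : ∀ α ∈ Delta d f,
      |f.coeff α| * ∏ i, N i ^ (α i) ≤ (∑ i, z α i * N i ^ d) +
        ((d : ℝ) - (wt α : ℝ)) *
        (if wt α < d then ((G.coeff α / (d : ℝ)) ^ d *
          ∏ i ∈ univ.filter (fun i => 0 < α i), ((α i : ℝ) / z α i) ^ (α i)) ^
            ((1 : ℝ) / ((d : ℝ) - (wt α : ℝ)))
         else 1) := by
    intro α hα
    have hαmem := hα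
    simp only [Delta, Finset.mem_filter] at hαmem
    have hwtα : wt α ≤ d := hαmem.2.1
    have key := amgm_key d hd2 hdeven α hwtα (G.coeff α) (z α) N hN
      (fun i => (hz1 α hα i).1) (fun i => (hz1 α hα i).2) (hz3 α hα)
    rwa [(by rw [hcoe α hα] : |G.coeff α| = |f.coeff α|)] at key
  -- the objective as a sum over Delta d f
  have hobj : obj d G z = ∑ α ∈ Delta d f, ((d : ℝ) - (wt α : ℝ)) *
      (if wt α < d then ((G.coeff α / (d : ℝ)) ^ d *
        ∏ i ∈ univ.filter (fun i => 0 < α i), ((α i : ℝ) / z α i) ^ (α i)) ^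
          ((1 : ℝ) / ((d : ℝ) - (wt α : ℝ)))
       else 1) := by
    rw [obj, hDG, Finset.sum_filter]
    apply Finset.sum_congr rfl
    intro α hα
    by_cases hlt : wt α < d
    · rw [if_pos hlt, if_pos hlt]
    · simp only [Delta, Finset.mem_filter] at hα
      have heq : wt α = d := le_antisymm hα.2.1 (not_lt.mp hlt)
      rw [if_neg hlt, if_neg hlt, heq, sub_self, zero_mul]
  have hsumper : ∑ α ∈ Delta d f, |f.coeff α| * ∏ i, N i ^ (α i)
      ≤ (∑ α ∈ Delta d f, ∑ i, z α i * N i ^ d) + obj d G z := by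
    rw [hobj, ← Finset.sum_add_distrib]
    exact Finset.sum_le_sum hper
  -- summed lam bound
  have hlamsum : (∑ i, N i ^ d * |f.coeff (Finsupp.single i d)|)
      + (∑ α ∈ Delta d f, ∑ i, z α i * N i ^ d) ≤ ∑ j, lam j := by
    have hsum := Finset.sum_le_sum (fun i (_ : i ∈ (univ : Finset (Fin n))) => hlam i)
    rw [Finset.sum_add_distrib] at hsum
    have hswap : ∑ i, N i ^ d * (∑ α ∈ Delta d f, z α i)
        = ∑ α ∈ Delta d f, ∑ i, z α i * N i ^ d := by
      simp_rw [Finset.mul_sum]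
      rw [Finset.sum_comm]
      exact Finset.sum_congr rfl (fun α _ => Finset.sum_congr rfl (fun i _ => by ring))
    rw [hswap] at hsum
    linarith [hsum]
  -- decomposition of Delta'
  have hdec := Delta'_split hd2 f hf hfd (fun α => |f.coeff α| * ∏ i, N i ^ (α i))
    (fun α h => by simp [h])
  have hs : ∑ i, |f.coeff (Finsupp.single i d)| * ∏ j, N j ^ (Finsupp.single i d j)
      = ∑ i, N i ^ d * |f.coeff (Finsupp.single i d)| :=
    Finset.sum_congr rfl (fun i _ => by rw [prod_single_pow]; ring)
  rw [hdec, hs]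
  linarith [hsumper, hlamsum]

end Stmt11LB


section Stmt11UB

variable {n : ℕ}

lemma gp_le_trivial (d : ℕ) (hd2 : 2 ≤ d) (hdeven : Even d)
    (f : MvPolynomial (Fin n) ℝ) (hf : f.totalDegree ≤ d)
    (N : Fin n → ℝ) (hN : ∀ i, 0 < N i)
    (g : Fin n → MvPolynomial (Fin n) ℝ)
    (hg : ∀ i, g i = 1 - (C (N i)⁻¹ * X i) ^ d)
    (hfd : ∀ i, f.coeff (Finsupp.single i d) ≤ 0)
    (lam : Fin n → ℝ) :
    gp d (f - ∑ j, C (lam j) * g j) ≤ ((trivialBound f N : ℝ) : EReal) := by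
  classical
  have hd0 : d ≠ 0 := by omega
  set G := f - ∑ j, C (lam j) * g j with hG
  set B : ℝ := ∑ α ∈ Delta' f, |f.coeff α| * ∏ i, N i ^ (α i) with hB
  have hrho : (((B - ∑ j, lam j : ℝ)) : EReal) ≤ rho d G := by
    apply le_sInf
    rintro r ⟨zz, hzf, rfl⟩
    rw [EReal.coe_le_coe_iff]
    have := lower_bound d hd2 hdeven f hf N hN g hg hfd lam zz hzf
    rw [← hG, ← hB] at this
    linarith
  have hstep : gp d G ≤ ((G.coeff 0 : ℝ) : EReal) - (((B - ∑ j, lam j : ℝ)) : EReal) :=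
    EReal.sub_le_sub le_rfl hrho
  refine le_trans hstep ?_
  rw [← EReal.coe_sub, EReal.coe_le_coe_iff]
  have h0 : G.coeff 0 = f.coeff 0 - ∑ j, lam j := coeff_G_zero hd0 N g hg lam f
  rw [h0, trivialBound, ← hB]
  linarith

lemma gp_achieve (d : ℕ) (hd2 : 2 ≤ d) (hdeven : Even d)
    (f : MvPolynomial (Fin n) ℝ) (hf : f.totalDegree ≤ d)
    (N : Fin n → ℝ) (hN : ∀ i, 0 < N i)
    (g : Fin n → MvPolynomial (Fin n) ℝ)
    (hg : ∀ i, g i = 1 - (C (N i)⁻¹ * X i) ^ d)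
    (hfd : ∀ i, f.coeff (Finsupp.single i d) ≤ 0) :
    ∃ lam : Fin n → ℝ, (∀ j, 0 ≤ lam j) ∧
      gp d (f - ∑ j, C (lam j) * g j) = ((trivialBound f N : ℝ) : EReal) := by
  classical
  have hd0 : d ≠ 0 := by omega
  have hdR : (0 : ℝ) < d := by exact_mod_cast (by omega : 0 < d)
  set t : (Fin n →₀ ℕ) → ℝ := fun α => |f.coeff α| / d * ∏ i, N i ^ (α i) with htdef
  set z : (Fin n →₀ ℕ) → Fin n → ℝ := fun α i => (α i : ℝ) * t α / N i ^ d with hzdef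
  set lam : Fin n → ℝ :=
    fun i => N i ^ d * ((∑ α ∈ Delta d f, z α i) - f.coeff (Finsupp.single i d)) with hlamdef
  set G := f - ∑ j, C (lam j) * g j with hG
  have hDG : Delta d G = Delta d f := Delta_G hd0 N g hg lam f
  have hcoe : ∀ α ∈ Delta d f, G.coeff α = f.coeff α := by
    intro α hα
    simp only [Delta, Finset.mem_filter] at hα
    exact coeff_G_ne hd0 N g hg lam f α hα.2.2.1 hα.2.2.2.1
  have htpos : ∀ α ∈ Delta d f, 0 < t α := by
    intro α hα
    simp only [Delta, Finset.mem_filter, MvPolynomial.mem_support_iff] at hα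
    have : 0 < |f.coeff α| := abs_pos.mpr hα.1
    have : 0 < ∏ i, N i ^ (α i) := Finset.prod_pos fun i _ => pow_pos (hN i) _
    rw [htdef]
    positivity
  have hznn : ∀ α i, 0 ≤ z α i → True := fun _ _ _ => trivial
  have hz_nonneg : ∀ α ∈ Delta d f, ∀ i, 0 ≤ z α i := by
    intro α hα i
    have h1 := (htpos α hα).le
    have h2 := (hN i).le
    rw [hzdef]
    positivity
  have hz_sum_nonneg : ∀ i, 0 ≤ ∑ α ∈ Delta d f, z α i := fun i =>
    Finset.sum_nonneg fun α hα => hz_nonneg α hα i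
  have hlam_nonneg : ∀ j, 0 ≤ lam j := by
    intro j
    show 0 ≤ N j ^ d * ((∑ α ∈ Delta d f, z α j) - f.coeff (Finsupp.single j d))
    have h1 := hz_sum_nonneg j
    have h2 := hfd j
    have h3 : (0:ℝ) < N j ^ d := pow_pos (hN j) d
    nlinarith
  -- feasibility
  have hfeas : Feasible d G z := by
    refine ⟨?_, ?_, ?_⟩
    · intro α hα i
      rw [hDG] at hα
      refine ⟨hz_nonneg α hα i, ?_⟩
      constructor
      · intro hz0
        by_contra hαi
        have h1 : (0:ℝ) < (α i : ℝ) := by exact_mod_cast Nat.pos_of_ne_zero hαi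
        have h2 := htpos α hα
        have h3 : (0:ℝ) < N i ^ d := pow_pos (hN i) d
        rw [hzdef] at hz0
        simp only at hz0
        have : (0:ℝ) < (α i : ℝ) * t α / N i ^ d := by positivity
        linarith [this]
      · intro hαi
        rw [hzdef]
        simp [hαi]
    · intro i
      rw [hDG, coeff_G_single hd0 N g hg lam f i]
      have hNi : N i ≠ 0 := (hN i).ne'
      have : lam i * ((N i)⁻¹) ^ d
          = (∑ α ∈ Delta d f, z α i) - f.coeff (Finsupp.single i d) := by
        rw [hlamdef, inv_pow]
        field_simp
      rw [this]
      linarith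
    · intro α hα hwtd
      rw [hDG] at hα
      rw [hcoe α hα]
      have hT := htpos α hα
      have hM : (0:ℝ) < ∏ i, N i ^ (α i) := Finset.prod_pos fun i _ => pow_pos (hN i) _
      have hstep : ∀ i ∈ univ.filter (fun i => 0 < α i),
          (z α i / (α i : ℝ)) ^ (α i) = (t α / N i ^ d) ^ (α i) := by
        intro i hi
        have hαi : 0 < α i := (Finset.mem_filter.mp hi).2
        have hαi' : ((α i : ℝ)) ≠ 0 := Nat.cast_ne_zero.mpr hαi.ne'
        congr 1
        show (α i : ℝ) * t α / N i ^ d / (α i : ℝ) = t α / N i ^ d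
        rw [div_div, mul_comm (N i ^ d) ((α i : ℝ))]
        exact mul_div_mul_left _ _ hαi'
      rw [Finset.prod_congr rfl hstep]
      have hdiv : ∀ i ∈ univ.filter (fun i => 0 < α i),
          (t α / N i ^ d) ^ (α i) = t α ^ (α i) / (N i ^ (α i)) ^ d := by
        intro i _
        rw [div_pow, pow_right_comm]
      rw [Finset.prod_congr rfl hdiv, Finset.prod_div_distrib,
        Finset.prod_pow_eq_pow_sum]
      have hsum : ∑ i ∈ univ.filter (fun i => 0 < α i), α i = d := by
        rw [← hwtd, wt_sum α]
        exact Finset.sum_subset (Finset.subset_univ _) (fun i _ hi => by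
          by_contra hne
          exact hi (Finset.mem_filter.mpr ⟨Finset.mem_univ i, Nat.pos_of_ne_zero hne⟩))
      have hprodN : ∏ i ∈ univ.filter (fun i => 0 < α i), (N i ^ (α i)) ^ d
          = (∏ i, N i ^ (α i)) ^ d := by
        rw [← Finset.prod_pow]
        exact Finset.prod_subset (Finset.subset_univ _) (fun i _ hi => by
          have hαi : α i = 0 := by
            by_contra hne
            exact hi (Finset.mem_filter.mpr ⟨Finset.mem_univ i, Nat.pos_of_ne_zero hne⟩)
          rw [hαi, pow_zero, one_pow])
      rw [hsum, hprodN]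
      have habs : (f.coeff α / (d : ℝ)) ^ d = (|f.coeff α| / (d : ℝ)) ^ d := by
        rw [← hdeven.pow_abs (f.coeff α / (d : ℝ)), abs_div, abs_of_pos hdR]
      have ht' : t α = |f.coeff α| / d * ∏ i, N i ^ (α i) := rfl
      rw [ht', mul_pow, mul_div_assoc, div_self (pow_ne_zero _ hM.ne'), mul_one]
      exact habs.symm
  set B : ℝ := ∑ α ∈ Delta' f, |f.coeff α| * ∏ i, N i ^ (α i) with hB
  have hMpos : ∀ β : Fin n →₀ ℕ, (0:ℝ) < ∏ i, N i ^ (β i) :=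
    fun β => Finset.prod_pos fun i _ => pow_pos (hN i) _
  -- objective value
  have hobj : obj d G z = ∑ α ∈ (Delta d f).filter (fun α => wt α < d),
      ((d : ℝ) - (wt α : ℝ)) * t α := by
    rw [obj, hDG]
    apply Finset.sum_congr rfl
    intro α hα
    obtain ⟨hαD, hαlt⟩ := Finset.mem_filter.mp hα
    congr 1
    have hT := htpos α hαD
    have hwtα : wt α ≤ d := by
      simp only [Delta, Finset.mem_filter] at hαD; exact hαD.2.1
    have hstep : ∀ i ∈ univ.filter (fun i => 0 < α i),
        ((α i : ℝ) / z α i) ^ (α i) = (N i ^ d / t α) ^ (α i) := by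
      intro i hi
      have hαi : 0 < α i := (Finset.mem_filter.mp hi).2
      have hαi' : ((α i : ℝ)) ≠ 0 := Nat.cast_ne_zero.mpr hαi.ne'
      have hNi : N i ^ d ≠ 0 := (pow_pos (hN i) d).ne'
      congr 1
      show (α i : ℝ) / ((α i : ℝ) * t α / N i ^ d) = N i ^ d / t α
      rw [div_div_eq_mul_div]
      exact mul_div_mul_left _ _ hαi'
    have hdiv : ∀ i ∈ univ.filter (fun i => 0 < α i),
        (N i ^ d / t α) ^ (α i) = (N i ^ (α i)) ^ d / t α ^ (α i) := by
      intro i _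
      rw [div_pow, pow_right_comm]
    rw [hcoe α hαD, Finset.prod_congr rfl hstep, Finset.prod_congr rfl hdiv,
      Finset.prod_div_distrib, Finset.prod_pow_eq_pow_sum]
    have hsumF : ∑ i ∈ univ.filter (fun i => 0 < α i), α i = wt α := by
      rw [wt_sum α]
      exact Finset.sum_subset (Finset.subset_univ _) (fun i _ hi => by
        by_contra hne
        exact hi (Finset.mem_filter.mpr ⟨Finset.mem_univ i, Nat.pos_of_ne_zero hne⟩))
    have hprodN : ∏ i ∈ univ.filter (fun i => 0 < α i), (N i ^ (α i)) ^ d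
        = (∏ i, N i ^ (α i)) ^ d := by
      rw [← Finset.prod_pow]
      exact Finset.prod_subset (Finset.subset_univ _) (fun i _ hi => by
        have hαi : α i = 0 := by
          by_contra hne
          exact hi (Finset.mem_filter.mpr ⟨Finset.mem_univ i, Nat.pos_of_ne_zero hne⟩)
        rw [hαi, pow_zero, one_pow])
    rw [hsumF, hprodN]
    have habs : (f.coeff α / (d : ℝ)) ^ d = (|f.coeff α| / (d : ℝ)) ^ d := by
      rw [← hdeven.pow_abs (f.coeff α / (d : ℝ)), abs_div, abs_of_pos hdR]
    have ht' : t α = |f.coeff α| / d * ∏ i, N i ^ (α i) := rfl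
    have hbase : (f.coeff α / (d : ℝ)) ^ d * ((∏ i, N i ^ (α i)) ^ d / t α ^ (wt α))
        = t α ^ (d - wt α) := by
      rw [habs, pow_sub₀ (t α) hT.ne' hwtα]
      rw [ht', mul_pow]
      ring
    rw [hbase, ← Real.rpow_natCast (t α) (d - wt α), ← Real.rpow_mul hT.le]
    have hcast : ((d - wt α : ℕ) : ℝ) = (d : ℝ) - (wt α : ℝ) := by
      rw [Nat.cast_sub hwtα]
    have hepos : (0:ℝ) < (d : ℝ) - (wt α : ℝ) := by
      rw [sub_pos]; exact_mod_cast hαlt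
    rw [hcast, mul_one_div, div_self hepos.ne', Real.rpow_one]
  -- value of the lam sum
  have hzN : ∀ α ∈ Delta d f, ∀ i : Fin n, N i ^ d * z α i = (α i : ℝ) * t α := by
    intro α hα i
    have hNi : N i ^ d ≠ 0 := (pow_pos (hN i) d).ne'
    show N i ^ d * ((α i : ℝ) * t α / N i ^ d) = (α i : ℝ) * t α
    field_simp
  have hlamval : ∑ j, lam j = (∑ i, N i ^ d * |f.coeff (Finsupp.single i d)|)
      + ∑ α ∈ Delta d f, (wt α : ℝ) * t α := by
    have hstep : ∀ j : Fin n, lam j = N j ^ d * (∑ α ∈ Delta d f, z α j)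
        + N j ^ d * |f.coeff (Finsupp.single j d)| := by
      intro j
      have habs : |f.coeff (Finsupp.single j d)| = - f.coeff (Finsupp.single j d) :=
        abs_of_nonpos (hfd j)
      rw [hlamdef, habs]
      ring
    rw [Finset.sum_congr rfl (fun j _ => hstep j), Finset.sum_add_distrib, add_comm]
    congr 1
    simp_rw [Finset.mul_sum]
    rw [Finset.sum_comm]
    apply Finset.sum_congr rfl
    intro α hα
    calc ∑ j, N j ^ d * z α j = ∑ j, (α j : ℝ) * t α :=
          Finset.sum_congr rfl (fun j _ => hzN α hα j)
      _ = (∑ j, (α j : ℝ)) * t α := by rw [Finset.sum_mul]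
      _ = (wt α : ℝ) * t α := by rw [wt_sum α, Nat.cast_sum]
  -- the key identity : lam sum + objective = B
  have hkey : (∑ j, lam j) + obj d G z = B := by
    rw [hlamval, hobj]
    have hsplit : (∑ α ∈ Delta d f, (wt α : ℝ) * t α)
        + ∑ α ∈ (Delta d f).filter (fun α => wt α < d), ((d : ℝ) - (wt α : ℝ)) * t α
        = ∑ α ∈ Delta d f, (d : ℝ) * t α := by
      rw [Finset.sum_filter, ← Finset.sum_add_distrib]
      apply Finset.sum_congr rfl
      intro α hα
      by_cases hlt : wt α < d
      · rw [if_pos hlt]; ring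
      · simp only [Delta, Finset.mem_filter] at hα
        have heq : wt α = d := le_antisymm hα.2.1 (not_lt.mp hlt)
        rw [if_neg hlt, heq]; ring
    have hdt : ∑ α ∈ Delta d f, (d : ℝ) * t α
        = ∑ α ∈ Delta d f, |f.coeff α| * ∏ i, N i ^ (α i) := by
      apply Finset.sum_congr rfl
      intro α _
      have ht' : t α = |f.coeff α| / d * ∏ i, N i ^ (α i) := rfl
      rw [ht']
      field_simp
    have hdec := Delta'_split hd2 f hf hfd (fun α => |f.coeff α| * ∏ i, N i ^ (α i))
      (fun α h => by simp [h])
    have hs : ∑ i, |f.coeff (Finsupp.single i d)| * ∏ j, N j ^ (Finsupp.single i d j)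
        = ∑ i, N i ^ d * |f.coeff (Finsupp.single i d)| :=
      Finset.sum_congr rfl (fun i _ => by rw [prod_single_pow]; ring)
    rw [hB, hdec, hs, add_assoc, hsplit, hdt]
  -- rho is exactly the objective value
  have hrho_le : rho d G ≤ ((obj d G z : ℝ) : EReal) := sInf_le ⟨z, hfeas, rfl⟩
  have hrho_ge : (((B - ∑ j, lam j : ℝ)) : EReal) ≤ rho d G := by
    apply le_sInf
    rintro r ⟨zz, hzf, rfl⟩
    rw [EReal.coe_le_coe_iff]
    have := lower_bound d hd2 hdeven f hf N hN g hg hfd lam zz hzf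
    rw [← hG, ← hB] at this
    linarith
  have hobjval : obj d G z = B - ∑ j, lam j := by linarith [hkey]
  have hrho : rho d G = ((obj d G z : ℝ) : EReal) := by
    refine le_antisymm hrho_le ?_
    rw [hobjval]
    exact hrho_ge
  refine ⟨lam, hlam_nonneg, ?_⟩
  rw [gp, hrho, coeff_G_zero hd0 N g hg lam f, ← EReal.coe_sub, EReal.coe_eq_coe_iff]
  rw [hobjval, trivialBound, ← hB]
  ring

end Stmt11UB


/-- Theorem 4.1(2): if `f_{d,i} ≤ 0` for all `i`, then
`s(f,g) = f_{tr,N}` for the hypercube constraints. -/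
theorem stmt_11 (n d : ℕ) (hd2 : 2 ≤ d) (hdeven : Even d)
    (f : MvPolynomial (Fin n) ℝ) (hf : f.totalDegree ≤ d)
    (N : Fin n → ℝ) (hN : ∀ i, 0 < N i)
    (g : Fin n → MvPolynomial (Fin n) ℝ)
    (hg : ∀ i, g i = 1 - (C (N i)⁻¹ * X i) ^ d)
    (hfd : ∀ i, f.coeff (Finsupp.single i d) ≤ 0) :
    sBound d f g = ((trivialBound f N : ℝ) : EReal) := by
  apply le_antisymm
  · apply sSup_le
    rintro r ⟨lam, hlam, rfl⟩
    exact gp_le_trivial d hd2 hdeven f hf N hN g hg hfd lam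
  · obtain ⟨lam, hlam, heq⟩ := gp_achieve d hd2 hdeven f hf N hN g hg hfd
    rw [← heq]
    exact le_sSup ⟨lam, hlam, rfl⟩
end Stmt11AMGM
end
end

section
/- (Lemma 4.2(1)) Let n ≥ 1, let α ∈ ℕⁿ with α_i > 0 for all i, let d be a positive integer with |α| := Σ_i α_i < d, and let c be a nonzero real number. Then the function φ(z) := Σ_{i=1}^n z_i + (d−|α|)·[(|c|/d)^d · ∏_{i=1}^n (α_i^{α_i}/z_i^{α_i})]^{1/(d−|α|)} on (0,∞)ⁿ satisfies φ(z) ≥ |c| for all z ∈ (0,∞)ⁿ, with equality at z_i = α_i·|c|/d (i = 1,…,n); i.e. the minimum value of φ on (0,∞)ⁿ is |c|, attained at z_i = α_i·|c|/d. -/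
open MvPolynomial Finset

noncomputable section

/-- Lemma 4.2(1): for `|α| < d` the minimum of
`Σ zᵢ + (d-|α|)[(|c|/d)^d ∏ αᵢ^{αᵢ}/zᵢ^{αᵢ}]^{1/(d-|α|)}` on `(0,∞)ⁿ` is `|c|`,
attained at `zᵢ = αᵢ|c|/d`. -/
theorem stmt_13 (n : ℕ) (hn : 1 ≤ n) (α : Fin n → ℕ) (hα : ∀ i, 0 < α i)
    (d : ℕ) (hd : 0 < d) (hlt : ∑ i, α i < d) (c : ℝ) (hc : c ≠ 0) :
    (∀ z : Fin n → ℝ, (∀ i, 0 < z i) →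
      |c| ≤ (∑ i, z i) +
        ((d : ℝ) - ((∑ i, α i : ℕ) : ℝ)) *
          ((|c| / d) ^ d * ∏ i, ((α i : ℝ) ^ (α i) / z i ^ (α i))) ^
            ((1 : ℝ) / ((d : ℝ) - ((∑ i, α i : ℕ) : ℝ)))) ∧
    (∑ i, (α i : ℝ) * |c| / d) +
        ((d : ℝ) - ((∑ i, α i : ℕ) : ℝ)) *
          ((|c| / d) ^ d *
            ∏ i, ((α i : ℝ) ^ (α i) / ((α i : ℝ) * |c| / d) ^ (α i))) ^
            ((1 : ℝ) / ((d : ℝ) - ((∑ i, α i : ℕ) : ℝ))) = |c| := by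
  have hd' : (0:ℝ) < d := by exact_mod_cast hd
  have hdne : (d:ℝ) ≠ 0 := ne_of_gt hd'
  have hcpos : (0:ℝ) < |c| := abs_pos.mpr hc
  have hcd : (0:ℝ) < |c| / d := div_pos hcpos hd'
  have hsd : ((∑ i, α i : ℕ) : ℝ) < (d:ℝ) := by exact_mod_cast hlt
  have hm : (0:ℝ) < (d:ℝ) - ((∑ i, α i : ℕ) : ℝ) := by linarith
  have hmne : (d:ℝ) - ((∑ i, α i : ℕ) : ℝ) ≠ 0 := ne_of_gt hm
  constructor
  · intro z hz
    set P : ℝ := (|c| / d) ^ d * ∏ i, ((α i : ℝ) ^ (α i) / z i ^ (α i)) with hP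
    have hPpos : 0 < P := by
      apply mul_pos (pow_pos hcd d)
      exact Finset.prod_pos fun i _ => div_pos (pow_pos (by exact_mod_cast hα i) _)
        (pow_pos (hz i) _)
    set A : ℝ := P ^ ((1 : ℝ) / ((d : ℝ) - ((∑ i, α i : ℕ) : ℝ))) with hA
    have hApos : 0 < A := Real.rpow_pos_of_pos hPpos _
    -- weighted AM-GM data
    set w : Fin (n+1) → ℝ := Fin.snoc (fun i => (α i : ℝ) / d)
      (((d:ℝ) - ((∑ i, α i : ℕ) : ℝ)) / d) with hw
    set t : Fin (n+1) → ℝ := Fin.snoc (fun i => z i / (α i : ℝ)) A with ht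
    have hwnn : ∀ j ∈ Finset.univ, 0 ≤ w j := by
      intro j _
      refine Fin.lastCases ?_ ?_ j
      · simp only [hw, Fin.snoc_last]
        push_cast at hm ⊢
        exact div_nonneg (by linarith) hd'.le
      · intro i
        simp only [hw, Fin.snoc_castSucc]
        positivity
    have hw1 : ∑ j, w j = 1 := by
      rw [Fin.sum_univ_castSucc]
      simp only [hw, Fin.snoc_castSucc, Fin.snoc_last]
      rw [← Finset.sum_div]
      push_cast
      field_simp
      ring
    have htnn : ∀ j ∈ Finset.univ, 0 ≤ t j := by
      intro j _
      refine Fin.lastCases ?_ ?_ j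
      · simp [ht, hApos.le]
      · intro i
        simp only [ht, Fin.snoc_castSucc]
        exact le_of_lt (div_pos (hz i) (by exact_mod_cast hα i))
    have amgm := Real.geom_mean_le_arith_mean_weighted Finset.univ w t hwnn hw1 htnn
    -- compute RHS of AM-GM
    have hRHS : ∑ j, w j * t j =
        ((∑ i, z i) + ((d : ℝ) - ((∑ i, α i : ℕ) : ℝ)) * A) / d := by
      rw [Fin.sum_univ_castSucc]
      simp only [hw, ht, Fin.snoc_castSucc, Fin.snoc_last]
      have : ∀ i : Fin n, (α i : ℝ) / d * (z i / (α i : ℝ)) = z i / d := by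
        intro i
        have hαne : ((α i : ℝ)) ≠ 0 := by
          exact_mod_cast (hα i).ne'
        field_simp
      rw [Finset.sum_congr rfl fun i _ => this i, ← Finset.sum_div]
      ring
    -- compute LHS of AM-GM
    have hLHS : ∏ j, t j ^ w j = |c| / d := by
      rw [Fin.prod_univ_castSucc]
      simp only [hw, ht, Fin.snoc_castSucc, Fin.snoc_last]
      have hAd : A ^ (((d:ℝ) - ((∑ i, α i : ℕ) : ℝ)) / d) = P ^ ((1:ℝ)/d) := by
        rw [hA, ← Real.rpow_mul hPpos.le]
        congr 1
        field_simp
      rw [hAd]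
      have hPd : P ^ ((1:ℝ)/d) =
          (|c| / d) * ∏ i, ((α i : ℝ) / z i) ^ ((α i : ℝ) / d) := by
        have h1 : ∀ i : Fin n, (α i : ℝ) ^ (α i) / z i ^ (α i) =
            ((α i : ℝ) / z i) ^ (α i) := fun i => (div_pow _ _ _).symm
        rw [hP, Finset.prod_congr rfl fun i _ => h1 i]
        rw [Real.mul_rpow (pow_nonneg hcd.le _)
          (Finset.prod_nonneg fun i _ => pow_nonneg
            (div_nonneg (Nat.cast_nonneg _) (hz i).le) _)]
        congr 1
        · rw [← Real.rpow_natCast (|c|/d) d, ← Real.rpow_mul hcd.le,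
            mul_one_div, div_self hdne, Real.rpow_one]
        · rw [← Real.finset_prod_rpow _ _
            (fun i _ => pow_nonneg (div_nonneg (Nat.cast_nonneg _) (hz i).le) _)]
          refine Finset.prod_congr rfl fun i _ => ?_
          rw [← Real.rpow_natCast ((α i : ℝ)/z i) (α i),
            ← Real.rpow_mul (div_nonneg (Nat.cast_nonneg _) (hz i).le)]
          congr 1
          field_simp
      rw [hPd, ← mul_assoc, mul_comm _ (|c|/d), mul_assoc, ← Finset.prod_mul_distrib]
      have : ∀ i : Fin n, (z i / (α i : ℝ)) ^ ((α i : ℝ) / d) *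
          ((α i : ℝ) / z i) ^ ((α i : ℝ) / d) = 1 := by
        intro i
        have hαpos : (0:ℝ) < (α i : ℝ) := by exact_mod_cast hα i
        rw [← Real.mul_rpow (div_nonneg (hz i).le hαpos.le)
          (div_nonneg hαpos.le (hz i).le)]
        rw [div_mul_div_comm, mul_comm (z i) ((α i:ℝ)), div_self
          (mul_pos hαpos (hz i)).ne', Real.one_rpow]
      rw [Finset.prod_congr rfl fun i _ => this i, Finset.prod_const_one, mul_one]
    rw [hLHS, hRHS] at amgm
    rw [div_le_div_iff₀ hd' hd'] at amgm
    · nlinarith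
  · -- equality part
    have hprod : ∏ i, ((α i : ℝ) ^ (α i) / ((α i : ℝ) * |c| / d) ^ (α i)) =
        ((|c| / d)⁻¹) ^ (∑ i, α i) := by
      rw [← Finset.prod_pow_eq_pow_sum]
      refine Finset.prod_congr rfl fun i _ => ?_
      have hαpos : (0:ℝ) < (α i : ℝ) := by exact_mod_cast hα i
      have h1 : (α i : ℝ) * |c| / d = (α i : ℝ) * (|c| / d) := by ring
      rw [h1, mul_pow]
      rw [div_mul_eq_div_div, div_self (by positivity), one_div, inv_pow]
    have hPval : (|c| / d) ^ d * ((|c| / d)⁻¹) ^ (∑ i, α i)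
        = (|c| / d) ^ (d - ∑ i, α i) := by
      rw [inv_pow, ← div_eq_mul_inv, pow_sub₀ _ (ne_of_gt hcd) hlt.le]
      exact div_eq_mul_inv _ _
    have hcast : ((d - ∑ i, α i : ℕ) : ℝ) = (d:ℝ) - ((∑ i, α i : ℕ) : ℝ) := by
      push_cast [Nat.cast_sub hlt.le]
      ring
    have hroot : ((|c| / d) ^ (d - ∑ i, α i) : ℝ) ^
        ((1 : ℝ) / ((d : ℝ) - ((∑ i, α i : ℕ) : ℝ))) = |c| / d := by
      rw [← Real.rpow_natCast (|c|/d) (d - ∑ i, α i), ← Real.rpow_mul hcd.le,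
        hcast, mul_one_div, div_self hmne, Real.rpow_one]
    have hsum : ∑ i, (α i : ℝ) * |c| / d = ((∑ i, α i : ℕ) : ℝ) * |c| / d := by
      rw [← Finset.sum_div, ← Finset.sum_mul]
      push_cast
      ring
    rw [hprod, hPval, hroot, hsum]
    field_simp
    ring
end
end

section
/- (Remark (1), pointwise form) Let d be an even integer with d ≥ max(2, deg f), let N_i > 0, and let I₁,…,I_ℓ and J₁,…,J_m be partitions of {1,…,n} with I₁,…,I_ℓ finer than J₁,…,J_m (each I_p is contained in some J_q). For λ ∈ [0,∞)^ℓ define μ ∈ [0,∞)^m by μ_q := Σ_{p : I_p ⊆ J_q} λ_p, and set G(λ) := f − Σ_{p=1}^ℓ λ_p(1 − Σ_{i∈I_p}(x_i/N_i)^d), H(μ) := f − Σ_{q=1}^m μ_q(1 − Σ_{i∈J_q}(x_i/N_i)^d). Then G(λ)_gp ≤ H(μ)_gp (as elements of ℝ ∪ {−∞}); in particular every G(λ)-feasible family z is also H(μ)-feasible, with the same objective value. -/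
open MvPolynomial Finset

noncomputable section

lemma coeff_lagr {n k : ℕ} (d : ℕ) (f : MvPolynomial (Fin n) ℝ)
    (c : Fin k → ℝ) (S : Fin k → Finset (Fin n)) (N : Fin n → ℝ) (α : Fin n →₀ ℕ) :
    (f - ∑ p, C (c p) * (1 - ∑ i ∈ S p, (C (N i)⁻¹ * X i) ^ d)).coeff α =
      f.coeff α - ∑ p, c p * ((if (0 : Fin n →₀ ℕ) = α then (1:ℝ) else 0)
        - ∑ i ∈ S p, if Finsupp.single i d = α then ((N i)⁻¹) ^ d else 0) := by
  simp only [coeff_sub, MvPolynomial.coeff_sum, coeff_C_mul, coeff_one, mul_pow, ← C_pow,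
    X_pow_eq_monomial, C_mul_monomial, mul_one, coeff_monomial, eq_comm]

lemma coeff_lagr_ne {n k : ℕ} (d : ℕ) (f : MvPolynomial (Fin n) ℝ)
    (c : Fin k → ℝ) (S : Fin k → Finset (Fin n)) (N : Fin n → ℝ) (α : Fin n →₀ ℕ)
    (h0 : α ≠ 0) (hs : ∀ i, α ≠ Finsupp.single i d) :
    (f - ∑ p, C (c p) * (1 - ∑ i ∈ S p, (C (N i)⁻¹ * X i) ^ d)).coeff α = f.coeff α := by
  rw [coeff_lagr]
  have : ∀ p : Fin k, ((if (0 : Fin n →₀ ℕ) = α then (1:ℝ) else 0)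
      - ∑ i ∈ S p, if Finsupp.single i d = α then ((N i)⁻¹) ^ d else 0) = 0 := by
    intro p
    rw [if_neg (fun h => h0 h.symm), Finset.sum_eq_zero, sub_zero]
    intro i _
    exact if_neg (fun h => hs i h.symm)
  simp only [this, mul_zero, Finset.sum_const_zero, sub_zero]

lemma coeff_lagr_zero {n k : ℕ} (d : ℕ) (hd : d ≠ 0) (f : MvPolynomial (Fin n) ℝ)
    (c : Fin k → ℝ) (S : Fin k → Finset (Fin n)) (N : Fin n → ℝ) :
    (f - ∑ p, C (c p) * (1 - ∑ i ∈ S p, (C (N i)⁻¹ * X i) ^ d)).coeff 0 =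
      f.coeff 0 - ∑ p, c p := by
  rw [coeff_lagr]
  congr 1
  apply Finset.sum_congr rfl
  intro p _
  rw [if_pos rfl, Finset.sum_eq_zero, sub_zero, mul_one]
  intro i _
  rw [if_neg]
  intro h
  exact hd (by simpa using (Finsupp.single_eq_zero).mp h)

lemma coeff_lagr_single {n k : ℕ} (d : ℕ) (hd : d ≠ 0) (f : MvPolynomial (Fin n) ℝ)
    (c : Fin k → ℝ) (S : Fin k → Finset (Fin n)) (N : Fin n → ℝ) (i : Fin n) :
    (f - ∑ p, C (c p) * (1 - ∑ j ∈ S p, (C (N j)⁻¹ * X j) ^ d)).coeff (Finsupp.single i d) =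
      f.coeff (Finsupp.single i d) +
        (∑ p ∈ univ.filter (fun p => i ∈ S p), c p) * ((N i)⁻¹) ^ d := by
  rw [coeff_lagr]
  have key : ∀ p : Fin k, c p * ((if (0 : Fin n →₀ ℕ) = Finsupp.single i d then (1:ℝ) else 0)
      - ∑ j ∈ S p, if Finsupp.single j d = Finsupp.single i d then ((N j)⁻¹) ^ d else 0) =
      -(if i ∈ S p then c p * ((N i)⁻¹) ^ d else 0) := by
    intro p
    rw [if_neg (fun h => hd (by simpa using (Finsupp.single_eq_zero).mp h.symm))]
    have : ∀ j : Fin n, (Finsupp.single j d = Finsupp.single i d) ↔ j = i := by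
      intro j
      constructor
      · intro h
        by_contra hne
        have := Finsupp.single_eq_single_iff _ _ _ _ |>.mp h
        rcases this with ⟨h1, _⟩ | ⟨h1, _⟩
        exacts [hne h1, hd h1]
      · rintro rfl; rfl
    simp only [this]
    rw [Finset.sum_ite_eq' (S p) i (fun j => ((N j)⁻¹) ^ d)]
    split <;> ring
  rw [Finset.sum_congr rfl (fun p _ => key p), Finset.sum_neg_distrib, sub_neg_eq_add]
  simp [Finset.sum_filter, Finset.sum_mul, ite_mul]

lemma Delta_eq_of {n : ℕ} (d : ℕ) (G H : MvPolynomial (Fin n) ℝ)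
    (h : ∀ α, α ≠ 0 → (∀ i, α ≠ Finsupp.single i d) → G.coeff α = H.coeff α) :
    Delta d G = Delta d H := by
  ext α
  simp only [Delta, Finset.mem_filter, mem_support_iff]
  constructor
  · rintro ⟨hne, hw, h0, hs, hsq⟩
    rw [h α h0 hs] at hne hsq
    exact ⟨hne, hw, h0, hs, hsq⟩
  · rintro ⟨hne, hw, h0, hs, hsq⟩
    rw [← h α h0 hs] at hne hsq
    exact ⟨hne, hw, h0, hs, hsq⟩

lemma coeff_eq_of_mem_Delta {n : ℕ} (d : ℕ) (G H : MvPolynomial (Fin n) ℝ)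
    (h : ∀ α, α ≠ 0 → (∀ i, α ≠ Finsupp.single i d) → G.coeff α = H.coeff α)
    (α : Fin n →₀ ℕ) (hα : α ∈ Delta d G) : G.coeff α = H.coeff α := by
  simp only [Delta, Finset.mem_filter] at hα
  exact h α hα.2.2.1 hα.2.2.2.1

/-- Remark (1), pointwise form: if the partition `I` refines `J`
and `μ_q = Σ_{p : I_p ⊆ J_q} λ_p`, then `G(λ)_gp ≤ H(μ)_gp`; in particular every
`G(λ)`-feasible `z` is `H(μ)`-feasible with the same objective value. -/
theorem stmt_15 (n l m d : ℕ) (hd2 : 2 ≤ d) (hdeven : Even d)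
    (f : MvPolynomial (Fin n) ℝ) (hf : f.totalDegree ≤ d)
    (N : Fin n → ℝ) (hN : ∀ i, 0 < N i)
    (I : Fin l → Finset (Fin n)) (J : Fin m → Finset (Fin n))
    (hneI : ∀ p, (I p).Nonempty)
    (hdisjI : ∀ p q, p ≠ q → Disjoint (I p) (I q))
    (hcoverI : ∀ i, ∃ p, i ∈ I p)
    (hneJ : ∀ q, (J q).Nonempty)
    (hdisjJ : ∀ p q, p ≠ q → Disjoint (J p) (J q))
    (hcoverJ : ∀ i, ∃ q, i ∈ J q)
    (hfiner : ∀ p, ∃ q, I p ⊆ J q)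
    (lam : Fin l → ℝ) (hlam : ∀ p, 0 ≤ lam p)
    (mu : Fin m → ℝ)
    (hmu : ∀ q, mu q = ∑ p ∈ univ.filter (fun p => I p ⊆ J q), lam p) :
    gp d (f - ∑ p, C (lam p) * (1 - ∑ i ∈ I p, (C (N i)⁻¹ * X i) ^ d)) ≤
      gp d (f - ∑ q, C (mu q) * (1 - ∑ i ∈ J q, (C (N i)⁻¹ * X i) ^ d)) ∧
    (∀ z : (Fin n →₀ ℕ) → Fin n → ℝ,
      Feasible d (f - ∑ p, C (lam p) * (1 - ∑ i ∈ I p, (C (N i)⁻¹ * X i) ^ d)) z →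
      Feasible d (f - ∑ q, C (mu q) * (1 - ∑ i ∈ J q, (C (N i)⁻¹ * X i) ^ d)) z ∧
      obj d (f - ∑ q, C (mu q) * (1 - ∑ i ∈ J q, (C (N i)⁻¹ * X i) ^ d)) z =
        obj d (f - ∑ p, C (lam p) * (1 - ∑ i ∈ I p, (C (N i)⁻¹ * X i) ^ d)) z) := by
  have hd0 : d ≠ 0 := by omega
  set G := f - ∑ p, C (lam p) * (1 - ∑ i ∈ I p, (C (N i)⁻¹ * X i) ^ d) with hGdef
  set H := f - ∑ q, C (mu q) * (1 - ∑ i ∈ J q, (C (N i)⁻¹ * X i) ^ d) with hHdef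
  have hGH : ∀ α, α ≠ 0 → (∀ i, α ≠ Finsupp.single i d) → G.coeff α = H.coeff α := by
    intro α h0 hs
    rw [hGdef, hHdef, coeff_lagr_ne d f lam I N α h0 hs, coeff_lagr_ne d f mu J N α h0 hs]
  have hDelta : Delta d G = Delta d H := Delta_eq_of d G H hGH
  -- unique part containing i, for I and for J
  have hfiltI : ∀ i p0, i ∈ I p0 → univ.filter (fun p => i ∈ I p) = {p0} := by
    intro i p0 hi
    ext p
    simp only [Finset.mem_filter, Finset.mem_univ, true_and, Finset.mem_singleton]
    constructor
    · intro hp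
      by_contra hne
      have := (hdisjI p p0 hne).le_bot (Finset.mem_inter.mpr ⟨hp, hi⟩)
      simp at this
    · rintro rfl; exact hi
  have hfiltJ : ∀ i q0, i ∈ J q0 → univ.filter (fun q => i ∈ J q) = {q0} := by
    intro i q0 hi
    ext q
    simp only [Finset.mem_filter, Finset.mem_univ, true_and, Finset.mem_singleton]
    constructor
    · intro hq
      by_contra hne
      have := (hdisjJ q q0 hne).le_bot (Finset.mem_inter.mpr ⟨hq, hi⟩)
      simp at this
    · rintro rfl; exact hi
  have hsingle : ∀ i, G.coeff (Finsupp.single i d) ≤ H.coeff (Finsupp.single i d) := by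
    intro i
    rw [hGdef, hHdef, coeff_lagr_single d hd0 f lam I N i, coeff_lagr_single d hd0 f mu J N i]
    obtain ⟨p0, hp0⟩ := hcoverI i
    obtain ⟨q0, hq0⟩ := hcoverJ i
    rw [hfiltI i p0 hp0, hfiltJ i q0 hq0, Finset.sum_singleton, Finset.sum_singleton]
    have hsub : I p0 ⊆ J q0 := by
      obtain ⟨q, hq⟩ := hfiner p0
      have : q = q0 := by
        by_contra hne
        have := (hdisjJ q q0 hne).le_bot (Finset.mem_inter.mpr ⟨hq hp0, hq0⟩)
        simp at this
      rwa [this] at hq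
    have hle : lam p0 ≤ mu q0 := by
      rw [hmu q0]
      exact Finset.single_le_sum (f := lam) (fun p _ => hlam p)
        (Finset.mem_filter.mpr ⟨Finset.mem_univ _, hsub⟩)
    have hN' : (0:ℝ) ≤ ((N i)⁻¹) ^ d :=
      pow_nonneg (inv_nonneg.mpr (hN i).le) d
    exact add_le_add (le_refl _) (mul_le_mul_of_nonneg_right hle hN')
  have hzero : G.coeff 0 = H.coeff 0 := by
    rw [hGdef, hHdef, coeff_lagr_zero d hd0 f lam I N, coeff_lagr_zero d hd0 f mu J N]
    have hsum : ∑ q, mu q = ∑ p, lam p := by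
      have hphi : ∀ p : Fin l, ∃ q, I p ⊆ J q := hfiner
      choose φ hφ using hphi
      have hfe : ∀ q, univ.filter (fun p => I p ⊆ J q) = univ.filter (fun p => φ p = q) := by
        intro q
        ext p
        simp only [Finset.mem_filter, Finset.mem_univ, true_and]
        constructor
        · intro hsub
          by_contra hne
          obtain ⟨i, hi⟩ := hneI p
          have := (hdisjJ (φ p) q hne).le_bot (Finset.mem_inter.mpr ⟨hφ p hi, hsub hi⟩)
          simp at this
        · rintro rfl; exact hφ p
      calc ∑ q, mu q = ∑ q, ∑ p ∈ univ.filter (fun p => φ p = q), lam p := by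
            refine Finset.sum_congr rfl fun q _ => ?_
            rw [hmu q, hfe q]
        _ = ∑ p, lam p := Finset.sum_fiberwise univ φ lam
    rw [hsum]
  -- feasibility transfer
  have hfeas : ∀ z : (Fin n →₀ ℕ) → Fin n → ℝ, Feasible d G z →
      Feasible d H z ∧ obj d H z = obj d G z := by
    intro z hz
    obtain ⟨h1, h2, h3⟩ := hz
    have hcoeff : ∀ α ∈ Delta d G, G.coeff α = H.coeff α :=
      coeff_eq_of_mem_Delta d G H hGH
    constructor
    · refine ⟨?_, ?_, ?_⟩
      · rw [← hDelta]; exact h1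
      · intro i
        rw [← hDelta]
        exact le_trans (h2 i) (hsingle i)
      · intro α hα hw
        rw [← hDelta] at hα
        rw [← hcoeff α hα]
        exact h3 α hα hw
    · unfold obj
      rw [← hDelta]
      refine Finset.sum_congr rfl fun α hα => ?_
      rw [hcoeff α (Finset.mem_filter.mp hα).1]
  refine ⟨?_, hfeas⟩
  -- gp inequality
  have hrho : rho d H ≤ rho d G := by
    apply sInf_le_sInf
    rintro r ⟨z, hz, rfl⟩
    obtain ⟨hz', hobj⟩ := hfeas z hz
    exact ⟨z, hz', by rw [hobj]⟩
  unfold gp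
  rw [hzero]
  exact EReal.sub_le_sub (le_refl _) hrho
end
end

section
/- (Remark (1)) Let d be an even integer with d ≥ max(2, deg f), let N_i > 0, and let I₁,…,I_ℓ and J₁,…,J_m be partitions of {1,…,n} with I₁,…,I_ℓ finer than J₁,…,J_m. Set g := (1−Σ_{i∈I₁}(x_i/N_i)^d, …, 1−Σ_{i∈I_ℓ}(x_i/N_i)^d) and h := (1−Σ_{i∈J₁}(x_i/N_i)^d, …, 1−Σ_{i∈J_m}(x_i/N_i)^d). Then s(f,g) ≤ s(f,h) (as elements of ℝ ∪ {±∞}). -/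
open MvPolynomial Finset

noncomputable section

/-! ### Auxiliary lemmas -/

lemma aux_pow_eq_monomial {n : ℕ} (N : Fin n → ℝ) (d : ℕ) (i : Fin n) :
    (C (N i)⁻¹ * X i : MvPolynomial (Fin n) ℝ) ^ d
      = monomial (Finsupp.single i d) ((N i)⁻¹ ^ d) := by
  rw [mul_pow, ← C_pow, X_pow_eq_monomial, C_mul_monomial, mul_one]

lemma coeff_comb_ne {n k d : ℕ} (f : MvPolynomial (Fin n) ℝ)
    (N : Fin n → ℝ) (P : Fin k → Finset (Fin n)) (lam : Fin k → ℝ)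
    (α : Fin n →₀ ℕ) (hα0 : α ≠ 0) (hαs : ∀ i, α ≠ Finsupp.single i d) :
    (f - ∑ p, C (lam p) * (1 - ∑ i ∈ P p, (C (N i)⁻¹ * X i) ^ d)).coeff α = f.coeff α := by
  have hz : ∀ p : Fin k, ∑ i ∈ P p,
      ((if Finsupp.single i d = α then ((N i)⁻¹ ^ d : ℝ) else 0)) = 0 :=
    fun p => Finset.sum_eq_zero fun i _ => if_neg fun hEq => hαs i hEq.symm
  simp only [coeff_sub, coeff_sum, coeff_C_mul, coeff_sub, coeff_one,
    aux_pow_eq_monomial N d, coeff_monomial, hz]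
  simp [Ne.symm hα0]

lemma coeff_comb_zero {n k d : ℕ} (hd : d ≠ 0) (f : MvPolynomial (Fin n) ℝ)
    (N : Fin n → ℝ) (P : Fin k → Finset (Fin n)) (lam : Fin k → ℝ) :
    (f - ∑ p, C (lam p) * (1 - ∑ i ∈ P p, (C (N i)⁻¹ * X i) ^ d)).coeff 0
      = f.coeff 0 - ∑ p, lam p := by
  simp only [coeff_sub, coeff_sum, coeff_C_mul, coeff_sub, coeff_one,
    aux_pow_eq_monomial N d, coeff_monomial, Finsupp.single_eq_zero]
  simp [hd]

lemma coeff_comb_single {n k d : ℕ} (hd : d ≠ 0) (f : MvPolynomial (Fin n) ℝ)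
    (N : Fin n → ℝ) (P : Fin k → Finset (Fin n)) (lam : Fin k → ℝ)
    (hdisj : ∀ p q, p ≠ q → Disjoint (P p) (P q))
    (i : Fin n) (p₀ : Fin k) (hi : i ∈ P p₀) :
    (f - ∑ p, C (lam p) * (1 - ∑ j ∈ P p, (C (N j)⁻¹ * X j) ^ d)).coeff (Finsupp.single i d)
      = f.coeff (Finsupp.single i d) + lam p₀ * (N i)⁻¹ ^ d := by
  have hinner : ∀ p : Fin k, ∑ j ∈ P p,
      ((if Finsupp.single j d = Finsupp.single i d then ((N j)⁻¹ ^ d : ℝ) else 0))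
      = if i ∈ P p then (N i)⁻¹ ^ d else 0 := by
    intro p
    rw [← Finset.sum_ite_eq' (P p) i (fun j => ((N j)⁻¹ ^ d : ℝ))]
    refine Finset.sum_congr rfl fun j _ => ?_
    congr 1
    simp [Finsupp.single_left_inj hd, eq_comm]
  have houter : ∑ p, lam p * (if i ∈ P p then ((N i)⁻¹ ^ d : ℝ) else 0)
      = lam p₀ * (N i)⁻¹ ^ d := by
    rw [Finset.sum_eq_single p₀]
    · simp [hi]
    · intro p _ hp
      have : i ∉ P p := fun hmem => Finset.disjoint_left.mp (hdisj p p₀ hp) hmem hi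
      simp [this]
    · simp
  have h0 : (Finsupp.single i d : Fin n →₀ ℕ) ≠ 0 := by simp [Finsupp.single_eq_zero, hd]
  simp only [coeff_sub, coeff_sum, coeff_C_mul, coeff_sub, coeff_one,
    aux_pow_eq_monomial N d, coeff_monomial, hinner]
  simp only [if_neg (show ¬(0 : Fin n →₀ ℕ) = Finsupp.single i d from Ne.symm h0),
    zero_sub, mul_neg, Finset.sum_neg_distrib, sub_neg_eq_add, houter]

lemma mem_Delta_ne {n d : ℕ} {F : MvPolynomial (Fin n) ℝ} {α : Fin n →₀ ℕ}
    (h : α ∈ Delta d F) : α ≠ 0 ∧ (∀ i, α ≠ Finsupp.single i d) := by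
  simp only [Delta, mem_filter] at h
  exact ⟨h.2.2.1, h.2.2.2.1⟩

lemma Delta_eq {n d : ℕ} (F H : MvPolynomial (Fin n) ℝ)
    (hother : ∀ α, α ≠ 0 → (∀ i, α ≠ Finsupp.single i d) → F.coeff α = H.coeff α) :
    Delta d F = Delta d H := by
  ext α
  simp only [Delta, mem_filter, mem_support_iff]
  constructor <;> rintro ⟨hne, hwt, h0, hs, hsq⟩
  · refine ⟨by rwa [← hother α h0 hs], hwt, h0, hs, by rwa [← hother α h0 hs]⟩
  · refine ⟨by rwa [hother α h0 hs], hwt, h0, hs, by rwa [hother α h0 hs]⟩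

lemma gp_mono {n : ℕ} (d : ℕ) (F H : MvPolynomial (Fin n) ℝ)
    (h0 : F.coeff 0 ≤ H.coeff 0)
    (hother : ∀ α, α ≠ 0 → (∀ i, α ≠ Finsupp.single i d) → F.coeff α = H.coeff α)
    (hdi : ∀ i, F.coeff (Finsupp.single i d) ≤ H.coeff (Finsupp.single i d)) :
    gp d F ≤ gp d H := by
  have hD : Delta d F = Delta d H := Delta_eq F H hother
  have hco : ∀ α ∈ Delta d F, F.coeff α = H.coeff α := fun α hα =>
    hother α (mem_Delta_ne hα).1 (mem_Delta_ne hα).2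
  have hrho : rho d H ≤ rho d F := by
    apply sInf_le_sInf
    rintro r ⟨z, ⟨h1, h2, h3⟩, rfl⟩
    refine ⟨z, ⟨?_, ?_, ?_⟩, ?_⟩
    · intro α hα; exact h1 α (hD ▸ hα)
    · intro i
      calc ∑ α ∈ Delta d H, z α i = ∑ α ∈ Delta d F, z α i := by rw [hD]
        _ ≤ F.coeff (Finsupp.single i d) := h2 i
        _ ≤ H.coeff (Finsupp.single i d) := hdi i
    · intro α hα hwt
      have hαF : α ∈ Delta d F := hD ▸ hα
      rw [← hco α hαF]
      exact h3 α hαF hwt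
    · congr 1
      unfold obj
      rw [← hD]
      exact Finset.sum_congr rfl fun α hα => by
        rw [hco α (Finset.mem_filter.mp hα).1]
  exact EReal.sub_le_sub (EReal.coe_le_coe_iff.mpr h0) hrho

/-- Remark (1): if the partition `I` refines `J` then
`s(f,g) ≤ s(f,h)` for the corresponding constraint tuples. -/
theorem stmt_16 (n l m d : ℕ) (hd2 : 2 ≤ d) (hdeven : Even d)
    (f : MvPolynomial (Fin n) ℝ) (hf : f.totalDegree ≤ d)
    (N : Fin n → ℝ) (hN : ∀ i, 0 < N i)
    (I : Fin l → Finset (Fin n)) (J : Fin m → Finset (Fin n))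
    (hneI : ∀ p, (I p).Nonempty)
    (hdisjI : ∀ p q, p ≠ q → Disjoint (I p) (I q))
    (hcoverI : ∀ i, ∃ p, i ∈ I p)
    (hneJ : ∀ q, (J q).Nonempty)
    (hdisjJ : ∀ p q, p ≠ q → Disjoint (J p) (J q))
    (hcoverJ : ∀ i, ∃ q, i ∈ J q)
    (hfiner : ∀ p, ∃ q, I p ⊆ J q)
    (g : Fin l → MvPolynomial (Fin n) ℝ)
    (hg : ∀ p, g p = 1 - ∑ i ∈ I p, (C (N i)⁻¹ * X i) ^ d)
    (h : Fin m → MvPolynomial (Fin n) ℝ)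
    (hh : ∀ q, h q = 1 - ∑ i ∈ J q, (C (N i)⁻¹ * X i) ^ d) :
    sBound d f g ≤ sBound d f h := by
  have hd0 : d ≠ 0 := by omega
  apply sSup_le_sSup_of_isCofinalFor
  rintro r ⟨lam, hlam, rfl⟩
  choose φ hφ using hfiner
  have hφu : ∀ p q, (∃ i, i ∈ I p ∧ i ∈ J q) → φ p = q := by
    intro p q ⟨i, hip, hiq⟩
    by_contra hne
    exact Finset.disjoint_left.mp (hdisjJ _ _ hne) (hφ p hip) hiq
  set mu : Fin m → ℝ := fun q => ∑ p ∈ univ.filter (fun p => φ p = q), lam p with hmu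
  have hmusum : ∑ q, mu q = ∑ p, lam p := Finset.sum_fiberwise univ φ lam
  have hgeq : (f - ∑ p, C (lam p) * g p)
      = f - ∑ p, C (lam p) * (1 - ∑ i ∈ I p, (C (N i)⁻¹ * X i) ^ d) := by
    simp only [hg]
  have hheq : (f - ∑ q, C (mu q) * h q)
      = f - ∑ q, C (mu q) * (1 - ∑ i ∈ J q, (C (N i)⁻¹ * X i) ^ d) := by
    simp only [hh]
  refine ⟨gp d (f - ∑ q, C (mu q) * h q),
    ⟨mu, fun q => Finset.sum_nonneg fun p _ => hlam p, rfl⟩, ?_⟩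
  rw [hgeq, hheq]
  apply gp_mono
  · rw [coeff_comb_zero hd0 f N I lam, coeff_comb_zero hd0 f N J mu, hmusum]
  · intro α hα0 hαs
    rw [coeff_comb_ne f N I lam α hα0 hαs, coeff_comb_ne f N J mu α hα0 hαs]
  · intro i
    obtain ⟨p₀, hp₀⟩ := hcoverI i
    have hiJ : i ∈ J (φ p₀) := hφ p₀ hp₀
    rw [coeff_comb_single hd0 f N I lam hdisjI i p₀ hp₀,
      coeff_comb_single hd0 f N J mu hdisjJ i (φ p₀) hiJ]
    have hlemu : lam p₀ ≤ mu (φ p₀) :=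
      Finset.single_le_sum (fun p _ => hlam p) (by simp)
    have hc : (0 : ℝ) ≤ (N i)⁻¹ ^ d :=
      pow_nonneg (inv_nonneg.mpr (hN i).le) d
    nlinarith [mul_le_mul_of_nonneg_right hlemu hc]
end
end
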